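/- arXiv:0910.4035 — 10 statements merged into one kernel-verified Lean document; each statement's English description precedes it below -/
import Mathlib

section
/- If an integer l ≥ 0 satisfies l > γ, then s_l ≥ −1. (This is the arithmetic content of Proposition 3.3: for l > γ the relevant first cohomology vanishes, i.e. s_l ≥ −1; in particular the polynomial P_{H^1}(t) = Σ_{l≥0} max(0, −s_l−1) t^l has degree at most max(0, γ).) -/
open scoped BigOperators

/-- `s_l := l·b₀ − Σ_i ⌈l·ω_i/α_i⌉`. -/
noncomputable def sVal (ν : ℕ) (b0 : ℤ) (α ω : Fin ν → ℤ) (l : ℤ) : ℤ :=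
  l * b0 - ∑ i, ⌈((l * ω i : ℤ) : ℚ) / (α i : ℚ)⌉

/-!
Since `⌈n/a⌉ ≤ (n + a - 1)/a` for integers `n` and `a > 0`, summing over `i` gives
`s_l ≥ l·|e| - ν + Σ 1/α_i`, and `l > γ` says exactly `l·|e| > ν - 2 - Σ 1/α_i`.
Hence `s_l > -2`.
-/

theorem Int.ceil_intCast_div_le {K : Type*} [Field K] [LinearOrder K] [IsStrictOrderedRing K]
    [FloorRing K] (n : ℤ) {a : ℤ} (ha : 0 < a) :
    (⌈(n : K) / a⌉ : K) ≤ n / a + 1 - 1 / a := by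
  have haK : (0 : K) < a := by exact_mod_cast ha
  have hlt : (⌈(n : K) / a⌉ : K) * a < n + a := by
    have := mul_lt_mul_of_pos_right (Int.ceil_lt_add_one ((n : K) / a)) haK
    rwa [add_mul, div_mul_cancel₀ _ haK.ne', one_mul] at this
  have hle : ⌈(n : K) / a⌉ * a ≤ n + a - 1 := by
    have : ⌈(n : K) / a⌉ * a < n + a := by exact_mod_cast hlt
    omega
  calc (⌈(n : K) / a⌉ : K) ≤ (n + a - 1) / a := by
        rw [le_div_iff₀ haK]; exact_mod_cast hle
    _ = n / a + 1 - 1 / a := by field_simp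

theorem le_sVal (ν : ℕ) (b0 : ℤ) {α : Fin ν → ℤ} (ω : Fin ν → ℤ) (hα : ∀ i, 0 < α i) (l : ℤ) :
    (l : ℚ) * (b0 - ∑ i, (ω i : ℚ) / α i) - ν + ∑ i, 1 / (α i : ℚ) ≤ sVal ν b0 α ω l := by
  have hceil : ∑ i, (⌈((l * ω i : ℤ) : ℚ) / α i⌉ : ℚ)
      ≤ ∑ i, (((l * ω i : ℤ) : ℚ) / α i + 1 - 1 / α i) :=
    Finset.sum_le_sum fun i _ => Int.ceil_intCast_div_le _ (hα i)
  unfold sVal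
  push_cast
  simp only [Finset.sum_sub_distrib, Finset.sum_add_distrib, Finset.sum_const, Finset.card_univ,
    Fintype.card_fin, nsmul_eq_mul, mul_one, Int.cast_mul, mul_div_assoc, ← Finset.mul_sum]
    at hceil ⊢
  linarith

theorem stmt0_general (ν : ℕ) (b0 : ℤ) (α ω : Fin ν → ℤ)
    (hω : ∀ i, 0 < ω i) (hωα : ∀ i, ω i < α i)
    (e : ℚ) (he : e = -(b0 : ℚ) + ∑ i, (ω i : ℚ) / (α i : ℚ)) (hneg : e < 0)
    (γ : ℚ) (hγ : γ = ((ν : ℚ) - 2 - ∑ i, 1 / (α i : ℚ)) / |e|)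
    (l : ℤ) (hl : (l : ℚ) > γ) :
    sVal ν b0 α ω l ≥ -1 := by
  have hlower := le_sVal ν b0 ω (fun i => (hω i).trans (hωα i)) l
  have hγl : (ν : ℚ) - 2 - ∑ i, 1 / (α i : ℚ) < l * -e := by
    rwa [hγ, abs_of_neg hneg, gt_iff_lt, div_lt_iff₀ (neg_pos.2 hneg)] at hl
  have hgt : ((-2 : ℤ) : ℚ) < sVal ν b0 α ω l := by
    rw [he] at hγl
    push_cast
    linarith
  have hgt' : (-2 : ℤ) < sVal ν b0 α ω l := by exact_mod_cast hgt
  omega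

/-- If an integer `l ≥ 0` satisfies `l > γ`, then `s_l ≥ −1`. -/
theorem stmt0 (ν : ℕ) (hν : 3 ≤ ν) (b0 : ℤ) (α ω : Fin ν → ℤ)
    (hω : ∀ i, 0 < ω i) (hωα : ∀ i, ω i < α i) (hcop : ∀ i, Int.gcd (α i) (ω i) = 1)
    (e : ℚ) (he : e = -(b0 : ℚ) + ∑ i, (ω i : ℚ) / (α i : ℚ)) (hneg : e < 0)
    (γ : ℚ) (hγ : γ = ((ν : ℚ) - 2 - ∑ i, 1 / (α i : ℚ)) / |e|)
    (l : ℤ) (hl0 : 0 ≤ l) (hl : (l : ℚ) > γ) :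
    sVal ν b0 α ω l ≥ -1 :=
  stmt0_general ν b0 α ω hω hωα e he hneg γ hγ l hl
end

section
/- The rational number 𝔬 := α·|e| is a positive integer, s_{l+α} = s_l + 𝔬 for every integer l ≥ 0, and consequently every integer l > α + γ satisfies s_l ≥ 0. -/
open scoped BigOperators

/-!
Since every `α_i` divides `α`, shifting `l` by `α` shifts each `l ω_i / α_i` by the integer
`(α / α_i) ω_i`, which passes through the ceiling; hence `s_{l+α} - s_l` is the integer
`α b₀ - Σ (α/α_i) ω_i = α |e|`. For the positivity, `⌈n / a⌉ ≤ (n + a - 1) / a` gives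
`s_l ≥ l |e| - Σ (1 - 1/α_i) = (l - γ) |e| - 2 > α |e| - 2 ≥ -1`.
-/

open Finset

section Ceil

variable {k : Type*} [Field k] [LinearOrder k] [IsStrictOrderedRing k] [FloorRing k]

theorem Int.ceil_intCast_add_mul_div (n m : ℤ) {a : ℤ} (ha : a ≠ 0) :
    ⌈((n + a * m : ℤ) : k) / a⌉ = ⌈(n : k) / a⌉ + m := by
  have ha' : (a : k) ≠ 0 := Int.cast_ne_zero.mpr ha
  rw [← Int.ceil_add_intCast]
  congr 1
  push_cast
  field_simp

theorem Int.cast_ceil_intCast_div_le (n : ℤ) {a : ℤ} (ha : 0 < a) :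
    (⌈(n : k) / a⌉ : k) ≤ (n + a - 1) / a := by
  have ha' : (0 : k) < a := Int.cast_pos.mpr ha
  have hlt : ⌈(n : k) / a⌉ * a < n + a := by
    have := mul_lt_mul_of_pos_right (Int.ceil_lt_add_one ((n : k) / a)) ha'
    rw [add_mul, one_mul, div_mul_cancel₀ _ ha'.ne'] at this
    exact_mod_cast this
  rw [le_div_iff₀ ha']
  exact_mod_cast Int.le_sub_one_of_lt hlt

end Ceil

theorem Finset.lcm_pos_of_pos {ι : Type*} {s : Finset ι} {f : ι → ℤ} (hf : ∀ i ∈ s, 0 < f i) :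
    0 < s.lcm f := by
  refine (Int.nonneg_of_normalize_eq_self Finset.normalize_lcm).lt_of_ne' fun h => ?_
  obtain ⟨i, hi, hfi⟩ := Finset.lcm_eq_zero_iff.mp h
  exact (hf i hi).ne' hfi

section SVal

variable {ν : ℕ} {b0 A : ℤ} {α ω : Fin ν → ℤ}

def sShift (ν : ℕ) (b0 A : ℤ) (α ω : Fin ν → ℤ) : ℤ :=
  A * b0 - ∑ i, A / α i * ω i

theorem sVal_add_of_dvd (hα : ∀ i, α i ≠ 0) (hdvd : ∀ i, α i ∣ A) (l : ℤ) :
    sVal ν b0 α ω (l + A) = sVal ν b0 α ω l + sShift ν b0 A α ω := by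
  have hceil : ∀ i, ⌈(((l + A) * ω i : ℤ) : ℚ) / α i⌉
      = ⌈((l * ω i : ℤ) : ℚ) / α i⌉ + A / α i * ω i := fun i => by
    rw [← Int.ceil_intCast_add_mul_div _ _ (hα i), ← mul_assoc, Int.mul_ediv_cancel' (hdvd i),
      add_mul]
  simp only [sVal, sShift, hceil, sum_add_distrib]
  ring

theorem cast_sShift (hα : ∀ i, α i ≠ 0) (hdvd : ∀ i, α i ∣ A) :
    (sShift ν b0 A α ω : ℚ) = A * (b0 - ∑ i, (ω i : ℚ) / α i) := by
  unfold sShift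
  push_cast
  rw [mul_sub, mul_sum]
  congr 1
  refine sum_congr rfl fun i _ => ?_
  rw [Int.cast_div (hdvd i) (Int.cast_ne_zero.mpr (hα i))]
  ring

theorem le_cast_sVal (hα : ∀ i, 0 < α i) (l : ℤ) :
    l * (b0 - ∑ i, (ω i : ℚ) / α i) - ∑ i, (1 - 1 / (α i : ℚ)) ≤ sVal ν b0 α ω l := by
  have hceil : ∀ i, (⌈((l * ω i : ℤ) : ℚ) / α i⌉ : ℚ) ≤ l * (ω i / α i) + (1 - 1 / α i) :=
    fun i => by
      have hα' : (α i : ℚ) ≠ 0 := Int.cast_ne_zero.mpr (hα i).ne'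
      refine (Int.cast_ceil_intCast_div_le _ (hα i)).trans_eq ?_
      push_cast
      field_simp
      ring
  have hsum := sum_le_sum fun i (_ : i ∈ univ) => hceil i
  rw [sum_add_distrib, ← mul_sum] at hsum
  unfold sVal
  push_cast at hsum ⊢
  linarith

end SVal

theorem stmt1_general (ν : ℕ) (b0 : ℤ) (α ω : Fin ν → ℤ)
    (hω : ∀ i, 0 < ω i) (hωα : ∀ i, ω i < α i)
    (e : ℚ) (he : e = -(b0 : ℚ) + ∑ i, (ω i : ℚ) / (α i : ℚ)) (hneg : e < 0)
    (A : ℤ) (hA : A = Finset.univ.lcm α)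
    (γ : ℚ) (hγ : γ = ((ν : ℚ) - 2 - ∑ i, 1 / (α i : ℚ)) / |e|) :
    ∃ o : ℤ, 0 < o ∧ (o : ℚ) = (A : ℚ) * |e| ∧
      (∀ l : ℤ, 0 ≤ l → sVal ν b0 α ω (l + A) = sVal ν b0 α ω l + o) ∧
      (∀ l : ℤ, (l : ℚ) > (A : ℚ) + γ → 0 ≤ sVal ν b0 α ω l) := by
  have hα : ∀ i, 0 < α i := fun i => (hω i).trans (hωα i)
  have hdvd : ∀ i, α i ∣ A := fun i => hA ▸ dvd_lcm (mem_univ i)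
  have hApos : (0 : ℚ) < A := Int.cast_pos.mpr (hA ▸ lcm_pos_of_pos fun i _ => hα i)
  have hepos : 0 < |e| := abs_pos.mpr hneg.ne
  have habs : |e| = b0 - ∑ i, (ω i : ℚ) / α i := by rw [abs_of_neg hneg, he]; ring
  have ho : (sShift ν b0 A α ω : ℚ) = A * |e| := by
    rw [habs]; exact cast_sShift (fun i => (hα i).ne') hdvd
  have hopos : 0 < sShift ν b0 A α ω := by exact_mod_cast ho ▸ mul_pos hApos hepos
  refine ⟨_, hopos, ho, fun l _ => sVal_add_of_dvd (fun i => (hα i).ne') hdvd l, fun l hl => ?_⟩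
  have hγe : γ * |e| = ν - 2 - ∑ i, 1 / (α i : ℚ) := by rw [hγ, div_mul_cancel₀ _ hepos.ne']
  have hsum : ∑ i, (1 - 1 / (α i : ℚ)) = ν - ∑ i, 1 / (α i : ℚ) := by simp [sum_sub_distrib]
  have hlow := le_cast_sVal (b0 := b0) (ω := ω) hα l
  rw [← habs, hsum] at hlow
  have hgap : 0 < (l - A - γ) * |e| := mul_pos (by linarith) hepos
  have hlt : sShift ν b0 A α ω - 2 < sVal ν b0 α ω l := by
    have : (sShift ν b0 A α ω : ℚ) - 2 < sVal ν b0 α ω l := by linarith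
    exact_mod_cast this
  omega

/-- The rational number `𝔬 := α·|e|` is a positive integer, `s_{l+α} = s_l + 𝔬` for every
integer `l ≥ 0`, and consequently every integer `l > α + γ` satisfies `s_l ≥ 0`. -/
theorem stmt1 (ν : ℕ) (hν : 3 ≤ ν) (b0 : ℤ) (α ω : Fin ν → ℤ)
    (hω : ∀ i, 0 < ω i) (hωα : ∀ i, ω i < α i) (hcop : ∀ i, Int.gcd (α i) (ω i) = 1)
    (e : ℚ) (he : e = -(b0 : ℚ) + ∑ i, (ω i : ℚ) / (α i : ℚ)) (hneg : e < 0)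
    (A : ℤ) (hA : A = Finset.univ.lcm α)
    (γ : ℚ) (hγ : γ = ((ν : ℚ) - 2 - ∑ i, 1 / (α i : ℚ)) / |e|) :
    ∃ o : ℤ, 0 < o ∧ (o : ℚ) = (A : ℚ) * |e| ∧
      (∀ l : ℤ, 0 ≤ l → sVal ν b0 α ω (l + A) = sVal ν b0 α ω l + o) ∧
      (∀ l : ℤ, (l : ℚ) > (A : ℚ) + γ → 0 ≤ sVal ν b0 α ω l) :=
  stmt1_general ν b0 α ω hω hωα e he hneg A hA γ hγ
end

section
/- For an integer l ≥ 0 and a tuple (k_1,…,k_ν) of nonnegative integers, the following are equivalent: (i) Σ_{i=1}^ν k_i/α_i = l·|e| and α_i divides k_i + l·ω_i for every i; (ii) s_l ≥ 0 and there exist nonnegative integers n_1,…,n_ν with Σ_{i=1}^ν n_i = s_l and k_i = n_i·α_i + (l·β_i mod α_i) for every i, where (l·β_i mod α_i) denotes the remainder of l·β_i upon division by α_i. (This is the monomial translation of Proposition 4.4: the invariant monomials of degree l are exactly M_l·{∏ a_i^{n_i} : Σ n_i = s_l}.) -/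
open scoped BigOperators

lemma myFloorDiv (a b : ℤ) (hb : 0 < b) : ⌊((a : ℚ) / (b : ℚ))⌋ = a / b := by
  have h1 : ((b.toNat : ℕ) : ℚ) = (b : ℚ) := by
    norm_cast; exact Int.toNat_of_nonneg hb.le
  calc ⌊((a : ℚ) / (b : ℚ))⌋ = ⌊((a : ℚ) / ((b.toNat : ℕ) : ℚ))⌋ := by rw [h1]
    _ = a / (b.toNat : ℤ) := Rat.floor_intCast_div_natCast a b.toNat
    _ = a / b := by rw [Int.toNat_of_nonneg hb.le]

lemma myModEq (a b : ℤ) (hb : 0 < b) :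
    (-a) % b = b * ⌈((a : ℚ) / (b : ℚ))⌉ - a := by
  have h1 : ⌊-((a : ℚ) / (b : ℚ))⌋ = -⌈((a : ℚ) / (b : ℚ))⌉ := Int.floor_neg
  have h2 : ⌊(((-a : ℤ) : ℚ) / (b : ℚ))⌋ = (-a) / b := myFloorDiv (-a) b hb
  have h3 : (((-a : ℤ) : ℚ) / (b : ℚ)) = -((a : ℚ) / (b : ℚ)) := by push_cast; ring
  rw [h3, h1] at h2
  have hceil : ⌈((a : ℚ) / (b : ℚ))⌉ = -((-a) / b) := by omega
  rw [hceil, Int.emod_def]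
  ring


/-- For an integer `l ≥ 0` and a tuple `(k_1,…,k_ν)` of nonnegative integers, the following are
equivalent: (i) `Σ_i k_i/α_i = l·|e|` and `α_i ∣ k_i + l·ω_i` for every `i`;
(ii) `s_l ≥ 0` and there exist nonnegative integers `n_1,…,n_ν` with `Σ n_i = s_l` and
`k_i = n_i·α_i + (l·β_i mod α_i)` for every `i`. -/
theorem stmt2 (ν : ℕ) (hν : 3 ≤ ν) (b0 : ℤ) (α ω : Fin ν → ℤ)
    (hω : ∀ i, 0 < ω i) (hωα : ∀ i, ω i < α i) (hcop : ∀ i, Int.gcd (α i) (ω i) = 1)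
    (e : ℚ) (he : e = -(b0 : ℚ) + ∑ i, (ω i : ℚ) / (α i : ℚ)) (hneg : e < 0)
    (β : Fin ν → ℤ) (hβ : ∀ i, β i = α i - ω i)
    (l : ℤ) (hl : 0 ≤ l) (k : Fin ν → ℤ) (hk : ∀ i, 0 ≤ k i) :
    (∑ i, (k i : ℚ) / (α i : ℚ) = (l : ℚ) * |e| ∧ ∀ i, α i ∣ k i + l * ω i) ↔
      (0 ≤ sVal ν b0 α ω l ∧ ∃ n : Fin ν → ℤ, (∀ i, 0 ≤ n i) ∧
        (∑ i, n i) = sVal ν b0 α ω l ∧ ∀ i, k i = n i * α i + (l * β i) % (α i)) := by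
  have hα : ∀ i, 0 < α i := fun i => (hω i).trans (hωα i)
  have hαQ : ∀ i, (α i : ℚ) ≠ 0 := fun i => by exact_mod_cast (hα i).ne'
  set c : Fin ν → ℤ := fun i => ⌈((l * ω i : ℤ) : ℚ) / (α i : ℚ)⌉ with hc
  have hsval : sVal ν b0 α ω l = l * b0 - ∑ i, c i := rfl
  have hr : ∀ i, (l * β i) % α i = α i * c i - l * ω i := by
    intro i
    have h1 : l * β i = -(l * ω i) + α i * l := by rw [hβ i]; ring
    rw [h1, Int.add_mul_emod_self_left]
    exact myModEq (l * ω i) (α i) (hα i)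
  have hr0 : ∀ i, 0 ≤ (l * β i) % α i := fun i => Int.emod_nonneg _ (hα i).ne'
  have hrlt : ∀ i, (l * β i) % α i < α i := fun i => Int.emod_lt_of_pos _ (hα i)
  have habs : |e| = (b0 : ℚ) - ∑ i, (ω i : ℚ) / (α i : ℚ) := by
    rw [abs_of_neg hneg, he]; ring
  -- key sum identity for any n with k i = n i * α i + r i
  have hkey : ∀ n : Fin ν → ℤ, (∀ i, k i = n i * α i + (l * β i) % (α i)) →
      (∑ i, (k i : ℚ) / (α i : ℚ)) =
        ((∑ i, n i : ℤ) : ℚ) + ((∑ i, c i : ℤ) : ℚ)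
          - (l : ℚ) * ∑ i, (ω i : ℚ) / (α i : ℚ) := by
    intro n hkn
    have hterm : ∀ i, (k i : ℚ) / (α i : ℚ) =
        (n i : ℚ) + (c i : ℚ) - (l : ℚ) * ((ω i : ℚ) / (α i : ℚ)) := by
      intro i
      have h1 : (k i : ℚ) = (n i : ℚ) * (α i : ℚ) + ((α i : ℚ) * (c i : ℚ) - (l : ℚ) * (ω i : ℚ)) := by
        have := hkn i
        rw [hr i] at this
        exact_mod_cast congrArg (Int.cast : ℤ → ℚ) this
      rw [h1]
      field_simp [hαQ i]
      ring
    rw [Finset.sum_congr rfl fun i _ => hterm i]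
    push_cast
    rw [Finset.sum_sub_distrib, Finset.sum_add_distrib, Finset.mul_sum]
  constructor
  · rintro ⟨hsum, hdvd⟩
    set n : Fin ν → ℤ := fun i => (k i - (l * β i) % α i) / α i with hn
    have hdvd' : ∀ i, α i ∣ k i - (l * β i) % α i := by
      intro i
      have h1 : k i - (l * β i) % α i = (k i + l * ω i) - α i * c i := by
        rw [hr i]; ring
      rw [h1]
      exact dvd_sub (hdvd i) (dvd_mul_right _ _)
    have hnm : ∀ i, n i * α i = k i - (l * β i) % α i :=
      fun i => Int.ediv_mul_cancel (hdvd' i)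
    have hkn : ∀ i, k i = n i * α i + (l * β i) % (α i) := by
      intro i; have := hnm i; linarith
    have hn0 : ∀ i, 0 ≤ n i := by
      intro i
      by_contra h
      push_neg at h
      have h1 : n i ≤ -1 := by omega
      nlinarith [hα i, hk i, hrlt i, hnm i]
    have hsumn : (∑ i, n i) = sVal ν b0 α ω l := by
      have h2 := hkey n hkn
      rw [hsum, habs] at h2
      have h3 : ((∑ i, n i : ℤ) : ℚ) = ((l * b0 - ∑ i, c i : ℤ) : ℚ) := by
        push_cast
        push_cast at h2
        linarith
      rw [hsval]
      exact_mod_cast h3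
    refine ⟨?_, n, hn0, hsumn, hkn⟩
    rw [← hsumn]
    exact Finset.sum_nonneg fun i _ => hn0 i
  · rintro ⟨hs, n, hn0, hnsum, hkn⟩
    constructor
    · have h2 := hkey n hkn
      rw [hnsum, hsval] at h2
      rw [h2, habs]
      push_cast
      ring
    · intro i
      refine ⟨n i + c i, ?_⟩
      rw [hkn i, hr i]
      ring
end

section
/- For every i ∈ {1,…,ν}, the order of h_i in the group G equals α_i·α̂_i/α. Consequently, the order of h_i equals α_i if and only if α = α̂_i. -/
open scoped BigOperators

/-- The quotient `G` of `∏_j ℤ/α_jℤ` by the cyclic subgroup generated by `(1,1,…,1)`. -/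
abbrev Gq (ν : ℕ) (α : Fin ν → ℕ) : Type :=
  (∀ j, ZMod (α j)) ⧸ AddSubgroup.zmultiples ((1 : ∀ j, ZMod (α j)))

/-- The image `h_i ∈ G` of the `i`-th standard generator `(0,…,0,1,0,…,0)`. -/
def hGen (ν : ℕ) (α : Fin ν → ℕ) (i : Fin ν) : Gq ν α :=
  QuotientAddGroup.mk (Pi.single i 1)

/-- For every `i ∈ {1,…,ν}` the order of `h_i` in the group `G` equals `α_i·α̂_i/α`.
Consequently, the order of `h_i` equals `α_i` if and only if `α = α̂_i`. -/
theorem stmt5 (ν : ℕ) (hν : 3 ≤ ν) (α : Fin ν → ℕ) (hα : ∀ i, 2 ≤ α i)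
    (A : ℕ) (hA : A = Finset.univ.lcm α)
    (Ahat : Fin ν → ℕ) (hAhat : ∀ i, Ahat i = (Finset.univ.erase i).lcm α) :
    ∀ i : Fin ν,
      addOrderOf (hGen ν α i) = α i * Ahat i / A ∧
      (addOrderOf (hGen ν α i) = α i ↔ A = Ahat i) := by
  intro i
  haveI : ∀ j, NeZero (α j) := fun j => ⟨by have := hα j; omega⟩
  have hα0 : ∀ j, α j ≠ 0 := fun j => (this j).1
  have hAhat0 : Ahat i ≠ 0 := by
    rw [hAhat]
    intro h
    obtain ⟨j, -, hj⟩ := (Finset.lcm_eq_zero_iff).1 h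
    exact hα0 j hj
  -- key characterization
  have key : ∀ n : ℕ, n • hGen ν α i = 0 ↔ Nat.gcd (α i) (Ahat i) ∣ n := by
    intro n
    rw [hGen, ← QuotientAddGroup.mk_nsmul, QuotientAddGroup.eq_zero_iff,
        AddSubgroup.mem_zmultiples_iff]
    have hcomp : ∀ (k : ℤ) (j : Fin ν),
        (k • (1 : ∀ j, ZMod (α j))) j = (k : ZMod (α j)) := by
      intro k j; simp [zsmul_one]
    have hsing : ∀ j : Fin ν, (n • (Pi.single i 1 : ∀ j, ZMod (α j))) j
        = if j = i then ((n : ℤ) : ZMod (α j)) else 0 := by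
      intro j
      by_cases h : j = i
      · subst h; simp
      · simp [Pi.single_apply, h]
    constructor
    · rintro ⟨k, hk⟩
      have hhat : (Ahat i : ℤ) ∣ k := by
        rw [Int.natCast_dvd, hAhat]
        refine Finset.lcm_dvd ?_
        intro j hj
        have hj' : j ≠ i := (Finset.mem_erase.1 hj).1
        have := congrFun hk j
        rw [hcomp, hsing, if_neg hj'] at this
        exact (Int.natCast_dvd).1 ((ZMod.intCast_zmod_eq_zero_iff_dvd k (α j)).1 this)
      have hi : (α i : ℤ) ∣ (n : ℤ) - k := by
        have := congrFun hk i
        rw [hcomp, hsing, if_pos rfl] at this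
        exact Int.ModEq.dvd ((ZMod.intCast_eq_intCast_iff _ _ _).1 this)
      have hd : (Nat.gcd (α i) (Ahat i) : ℤ) ∣ (n : ℤ) := by
        have h1 : (Nat.gcd (α i) (Ahat i) : ℤ) ∣ k :=
          dvd_trans (Int.natCast_dvd_natCast.2 (Nat.gcd_dvd_right _ _)) hhat
        have h2 : (Nat.gcd (α i) (Ahat i) : ℤ) ∣ (n : ℤ) - k :=
          dvd_trans (Int.natCast_dvd_natCast.2 (Nat.gcd_dvd_left _ _)) hi
        have := dvd_add h2 h1
        simpa using this
      exact_mod_cast Int.natCast_dvd_natCast.1 hd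
    · rintro ⟨m, hm⟩
      set a : ℤ := (α i : ℤ)
      set b : ℤ := (Ahat i : ℤ)
      have hgcd : (Nat.gcd (α i) (Ahat i) : ℤ) = a * Int.gcdA a b + b * Int.gcdB a b := by
        have := Int.gcd_eq_gcd_ab a b
        rwa [show Int.gcd a b = Nat.gcd (α i) (Ahat i) by
          simp [Int.gcd, a, b]] at this
      refine ⟨b * Int.gcdB a b * m, ?_⟩
      funext j
      rw [hcomp, hsing]
      by_cases h : j = i
      · subst h
        rw [if_pos rfl, ZMod.intCast_eq_intCast_iff]
        have : a ∣ (n : ℤ) - b * Int.gcdB a b * m := by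
          have : (n : ℤ) = (a * Int.gcdA a b + b * Int.gcdB a b) * m := by
            rw [← hgcd]; exact_mod_cast congrArg (Nat.cast : ℕ → ℤ) hm
          rw [this]; ring_nf
          exact ⟨Int.gcdA a b * m, by ring⟩
        exact (Int.modEq_iff_dvd).2 (by simpa using this)
      · rw [if_neg h, ZMod.intCast_zmod_eq_zero_iff_dvd]
        have hjb : (α j : ℤ) ∣ b := by
          rw [show b = ((Ahat i : ℕ) : ℤ) from rfl]
          exact Int.natCast_dvd_natCast.2 (by
            rw [hAhat]
            exact Finset.dvd_lcm (Finset.mem_erase.2 ⟨h, Finset.mem_univ j⟩))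
        exact dvd_mul_of_dvd_left (dvd_mul_of_dvd_left hjb _) m
  -- compute order
  have horder : addOrderOf (hGen ν α i) = Nat.gcd (α i) (Ahat i) := by
    refine Nat.dvd_antisymm
      (addOrderOf_dvd_of_nsmul_eq_zero ((key _).2 dvd_rfl))
      ((key _).1 (addOrderOf_nsmul_eq_zero _))
  have hAl : A = Nat.lcm (α i) (Ahat i) := by
    rw [hA, hAhat i]
    conv_lhs => rw [← Finset.insert_erase (Finset.mem_univ i), Finset.lcm_insert]
    rfl
  have hlcm_pos : 0 < Nat.lcm (α i) (Ahat i) := Nat.pos_of_ne_zero (Nat.lcm_ne_zero (hα0 i) hAhat0)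
  constructor
  · rw [horder, hAl, ← Nat.gcd_mul_lcm (α i) (Ahat i), Nat.mul_div_cancel _ hlcm_pos]
  · rw [horder, hAl]
    constructor
    · intro h
      have hdvd : α i ∣ Ahat i := h ▸ Nat.gcd_dvd_right (α i) (Ahat i)
      exact Nat.dvd_antisymm (Nat.lcm_dvd hdvd dvd_rfl) (Nat.dvd_lcm_right _ _)
    · intro h
      exact Nat.gcd_eq_left (h ▸ Nat.dvd_lcm_left (α i) (Ahat i))
end

section
/- Let M be a matrix of full rank type, let G be a nonempty finite set of squarefree monomials of A containing the variable a_{i_0} for some index i_0, and let J be the ideal of A generated by G. Then: (1) if every element of G is divisible by a_{i_0} (i.e. J ⊆ (a_{i_0})), then dim_ℂ (A/(J + I_M))_k = 1 for every integer k ≥ 0; (2) if some element m of G satisfies a_{i_0} ∤ m and deg m ≤ k, then dim_ℂ (A/(J + I_M))_k = 0. -/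
open scoped BigOperators

/-- The dimension of the degree-`k` homogeneous component of `A/K`:
`dim_ℂ A_k − dim_ℂ (K ∩ A_k)`. -/
noncomputable def hdim {ν : ℕ} (K : Ideal (MvPolynomial (Fin ν) ℂ)) (k : ℕ) : ℕ :=
  Module.finrank ℂ (MvPolynomial.homogeneousSubmodule (Fin ν) ℂ k) -
    Module.finrank ℂ
      (Submodule.restrictScalars ℂ K ⊓ MvPolynomial.homogeneousSubmodule (Fin ν) ℂ k :
        Submodule ℂ (MvPolynomial (Fin ν) ℂ))

/-- A `(ν−2)×ν` complex matrix is of full rank type if every `(ν−2)×(ν−2)` minor is nonzero. -/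
def FullRankType (ν : ℕ) (M : Matrix (Fin (ν - 2)) (Fin ν) ℂ) : Prop :=
  ∀ g : Fin (ν - 2) ↪ Fin ν, (M.submatrix id g).det ≠ 0

/-- The ideal `I_M` generated by the `ν−2` linear forms `ℓ_j = Σ_i M_{j,i}·a_i`. -/
noncomputable def IM {ν : ℕ} (M : Matrix (Fin (ν - 2)) (Fin ν) ℂ) :
    Ideal (MvPolynomial (Fin ν) ℂ) :=
  Ideal.span (Set.range fun j : Fin (ν - 2) =>
    ∑ i, MvPolynomial.C (M j i) * MvPolynomial.X i)

/-- A squarefree monomial: each variable occurs with exponent 0 or 1. -/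
def IsSqfreeMonomial {ν : ℕ} (p : MvPolynomial (Fin ν) ℂ) : Prop :=
  ∃ T : Finset (Fin ν), p = ∏ i ∈ T, MvPolynomial.X i


/-!
The linear forms in `K = J + I_M` are exactly those vanishing at a point `v` with `v i₀ = 0` and
`M v = 0`: full rank type makes the rows of `M` together with `e_{i₀}` span a hyperplane, and it
also forces `v i ≠ 0` for `i ≠ i₀`. Modulo the `2 × 2` minors `v a · X i - v i · X a` of `(v, X)`,
which are such forms, every form `f` of degree `k` is congruent to `f(v) / (v a)^k · X a ^ k`.
So `(A/K)_k` is the line spanned by `X a ^ k` when `K` vanishes at `v` (case 1), and it is zero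
once `K` contains a form of degree at most `k` not vanishing at `v`, such as a squarefree monomial
avoiding `X i₀` (case 2).
-/

open MvPolynomial Matrix

namespace MvPolynomial

variable {σ R S : Type*}

instance [CommSemiring R] [Finite σ] (n : ℕ) : Module.Finite R (homogeneousSubmodule σ R n) :=
  Module.Finite.iff_fg.mpr (homogeneousSubmodule_fg σ R n)

theorem IsHomogeneous.aeval_mul_left [CommSemiring R] [CommSemiring S] [Algebra R S]
    {φ : MvPolynomial σ R} {n : ℕ} (hφ : φ.IsHomogeneous n) (c : S) (y : σ → S) :
    MvPolynomial.aeval (fun i => c * y i) φ = c ^ n * MvPolynomial.aeval y φ := by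
  classical
  rw [φ.as_sum, map_sum, map_sum, Finset.mul_sum]
  refine Finset.sum_congr rfl fun d hd => ?_
  have hdeg : d.sum (fun _ e => e) = n := by
    simpa [Finsupp.weight_apply, Finsupp.sum] using hφ (mem_support_iff.mp hd)
  simp only [aeval_monomial, mul_pow, Finsupp.prod_mul, ← hdeg]
  rw [Finsupp.prod, Finsupp.sum, Finset.prod_pow_eq_pow_sum]
  ring

theorem aeval_C_comp {τ : Type*} [CommSemiring R] (v : σ → R) (φ : MvPolynomial σ R) :
    aeval (fun i => (C (v i) : MvPolynomial τ R)) φ = C (aeval v φ) := by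
  simpa using (comp_aeval_apply (Algebra.ofId R (MvPolynomial τ R)) φ (f := v)).symm

section MinorIdeal

variable [CommRing R] {K : Ideal (MvPolynomial σ R)} {v : σ → R} {a : σ}

theorem C_mul_X_sub_C_mul_X_mem [Fintype σ]
    (hK : ∀ w : σ → R, v ⬝ᵥ w = 0 → Fintype.linearCombination R X w ∈ K) (a i : σ) :
    C (v a) * X i - C (v i) * X a ∈ K := by
  classical
  convert hK (v a • Pi.single i 1 - v i • Pi.single a 1) (by simp [mul_comm]) using 1
  simp [Fintype.linearCombination_apply_single, smul_eq_C_mul]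

theorem C_pow_mul_sub_C_aeval_mul_X_pow_mem_of_isHomogeneous
    (hK : ∀ i, C (v a) * X i - C (v i) * X a ∈ K) {φ : MvPolynomial σ R} {n : ℕ}
    (hφ : φ.IsHomogeneous n) : C (v a) ^ n * φ - C (aeval v φ) * X a ^ n ∈ K := by
  let π := Ideal.Quotient.mkₐ R K
  have hπ : ∀ i, π (C (v a) * X i) = π (X a * C (v i)) := fun i => by
    rw [Ideal.Quotient.mkₐ_eq_mk, Ideal.Quotient.eq, mul_comm (X a)]
    exact hK i
  rw [← Ideal.Quotient.eq, ← Ideal.Quotient.mkₐ_eq_mk R]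
  calc π (C (v a) ^ n * φ) = π (aeval (fun i => C (v a) * X i) φ) := by
        rw [hφ.aeval_mul_left, aeval_X_left_apply]
    _ = π (aeval (fun i => X a * C (v i)) φ) := by simp only [comp_aeval_apply, hπ]
    _ = π (C (aeval v φ) * X a ^ n) := by rw [hφ.aeval_mul_left, aeval_C_comp, mul_comm]

theorem mem_iff_C_aeval_mul_X_pow_mem_of_isHomogeneous (hva : IsUnit (v a))
    (hK : ∀ i, C (v a) * X i - C (v i) * X a ∈ K) {φ : MvPolynomial σ R} {n : ℕ}
    (hφ : φ.IsHomogeneous n) : φ ∈ K ↔ C (aeval v φ) * X a ^ n ∈ K := by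
  have hmem := C_pow_mul_sub_C_aeval_mul_X_pow_mem_of_isHomogeneous hK hφ
  rw [← K.unit_mul_mem_iff_mem ((hva.map C).pow n)]
  exact ⟨fun h => by simpa using K.sub_mem h hmem, fun h => by simpa using K.add_mem hmem h⟩

end MinorIdeal

end MvPolynomial

theorem Module.Dual.finrank_ker_inf_add_one {K V : Type*} [Field K] [AddCommGroup V] [Module K V]
    {W : Submodule K V} [FiniteDimensional K W] {f : Module.Dual K V} {w : V} (hw : w ∈ W)
    (hfw : f w ≠ 0) : Module.finrank K ↥(LinearMap.ker f ⊓ W) + 1 = Module.finrank K W := by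
  have hf : f.domRestrict W ≠ 0 := fun h => hfw (by simpa using LinearMap.congr_fun h ⟨w, hw⟩)
  rw [← Module.Dual.finrank_ker_add_one_of_ne_zero hf, LinearMap.ker_domRestrict,
    ← (Submodule.comapSubtypeEquivOfLe (inf_le_right : LinearMap.ker f ⊓ W ≤ W)).finrank_eq,
    Submodule.comap_inf, Submodule.comap_subtype_self, inf_top_eq]

theorem Matrix.mem_of_dotProduct_eq_zero {K n : Type*} [Field K] [Fintype n] [DecidableEq n]
    {R : Submodule K (n → K)} {v : n → K} (hv : v ≠ 0) (hR : ∀ r ∈ R, v ⬝ᵥ r = 0)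
    (hdim : Fintype.card n ≤ Module.finrank K R + 1) {w : n → K} (hw : v ⬝ᵥ w = 0) : w ∈ R := by
  let f := dotProductEquiv K n v
  have hf : f ≠ 0 := (LinearEquiv.map_ne_zero_iff _).mpr hv
  have hker := Module.Dual.finrank_ker_add_one_of_ne_zero hf
  rw [Module.finrank_fintype_fun_eq_card] at hker
  have hle : R ≤ LinearMap.ker f := fun r hr => hR r hr
  exact (Submodule.eq_of_le_of_finrank_le hle (by omega)).symm ▸ hw

section

variable {ν : ℕ}

theorem FullRankType.eq_zero_of_vecMul_eq_zero_off {M : Matrix (Fin (ν - 2)) (Fin ν) ℂ}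
    (hM : FullRankType ν M) {i₀ i₁ : Fin ν} (h : i₁ ≠ i₀) {c : Fin (ν - 2) → ℂ}
    (hc : ∀ i, i ≠ i₀ → i ≠ i₁ → (c ᵥ* M) i = 0) : c = 0 := by
  classical
  let S : Finset (Fin ν) := {i₀, i₁}ᶜ
  have hS : S.card = ν - 2 := by
    rw [Finset.card_compl, Finset.card_pair h.symm, Fintype.card_fin]
  let g := (S.orderEmbOfFin hS).toEmbedding
  refine eq_zero_of_vecMul_eq_zero (hM g) (funext fun s => ?_)
  have hs : g s ∈ S := S.orderEmbOfFin_mem hS s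
  simp only [S, Finset.mem_compl, Finset.mem_insert, Finset.mem_singleton, not_or] at hs
  simpa [vecMul, dotProduct] using hc (g s) hs.1 hs.2

theorem FullRankType.exists_kernel_vector {M : Matrix (Fin (ν - 2)) (Fin ν) ℂ}
    (hM : FullRankType ν M) {i₀ i₁ : Fin ν} (h : i₁ ≠ i₀) :
    ∃ v : Fin ν → ℂ, v i₀ = 0 ∧ M *ᵥ v = 0 ∧ (∀ i, i ≠ i₀ → v i ≠ 0) ∧
      ∀ w, v ⬝ᵥ w = 0 → w ∈ Submodule.span ℂ (Set.range M) ⊔ ℂ ∙ Pi.single i₀ 1 := by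
  classical
  let Ψ := M.vecMulLinear.coprod (LinearMap.toSpanSingleton ℂ _ (Pi.single i₀ (1 : ℂ)))
  have hΨ : ∀ c c₀, Ψ (c, c₀) = c ᵥ* M + c₀ • Pi.single i₀ 1 := fun _ _ => rfl
  have hrange : LinearMap.range Ψ = Submodule.span ℂ (Set.range M) ⊔ ℂ ∙ Pi.single i₀ 1 := by
    rw [LinearMap.range_coprod, range_vecMulLinear, LinearMap.range_toSpanSingleton]
    rfl
  have hoff : ∀ {i₂ c c₀}, i₂ ≠ i₀ → (∀ i, i ≠ i₀ → i ≠ i₂ → Ψ (c, c₀) i = 0) → c = 0 :=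
    fun h₂ hc => hM.eq_zero_of_vecMul_eq_zero_off h₂ fun i hi hi₂ => by
      simpa [hΨ, Pi.single_apply, hi] using hc i hi hi₂
  have hinj : Function.Injective Ψ := by
    rw [← LinearMap.ker_eq_bot, Submodule.eq_bot_iff]
    rintro ⟨c, c₀⟩ hker
    rw [LinearMap.mem_ker] at hker
    have hc : c = 0 := hoff h fun i _ _ => by rw [hker]; rfl
    have hc₀ := congr_fun hker i₀
    simp_all
  let Φ := M.mulVecLin.prod (LinearMap.proj i₀)
  have hν : 2 ≤ ν := by have := Fin.val_ne_of_ne h; omega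
  obtain ⟨v, hvΦ, hv⟩ := Submodule.exists_mem_ne_zero_of_ne_bot (LinearMap.ker_ne_bot_of_finrank_lt
    (f := Φ) (by simp [Module.finrank_prod]; omega))
  have hMv : M *ᵥ v = 0 := congr_arg Prod.fst hvΦ
  have hv₀ : v i₀ = 0 := congr_arg Prod.snd hvΦ
  have horth : ∀ r ∈ LinearMap.range Ψ, v ⬝ᵥ r = 0 := by
    rintro _ ⟨⟨c, c₀⟩, rfl⟩
    rw [hΨ, dotProduct_add, dotProduct_comm, ← dotProduct_mulVec, hMv]
    simp [hv₀]
  have hspan : ∀ w, v ⬝ᵥ w = 0 → w ∈ LinearMap.range Ψ := fun w =>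
    mem_of_dotProduct_eq_zero hv horth (by
      rw [LinearMap.finrank_range_of_inj hinj]; simp [Module.finrank_prod]; omega)
  refine ⟨v, hv₀, hMv, fun i₂ h₂ hvi => ?_, fun w hw => hrange ▸ hspan w hw⟩
  -- otherwise `e_{i₂}` would be orthogonal to `v`, hence a combination of the rows and `e_{i₀}`
  obtain ⟨⟨c, c₀⟩, hc⟩ := hspan (Pi.single i₂ 1) (by simp [hvi])
  have hc0 : c = 0 := hoff h₂ fun i _ hi => by rw [hc]; simp [hi]
  have := congr_fun hc i₂
  simp [hΨ, hc0, h₂] at this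

theorem linearCombination_X_mem {M : Matrix (Fin (ν - 2)) (Fin ν) ℂ} {i₀ : Fin ν}
    {K : Ideal (MvPolynomial (Fin ν) ℂ)} (hX : X i₀ ∈ K) (hIM : IM M ≤ K) {w : Fin ν → ℂ}
    (hw : w ∈ Submodule.span ℂ (Set.range M) ⊔ ℂ ∙ Pi.single i₀ 1) :
    Fintype.linearCombination ℂ X w ∈ K := by
  classical
  suffices Submodule.span ℂ (Set.range M) ⊔ ℂ ∙ Pi.single i₀ 1 ≤
      (K.restrictScalars ℂ).comap (Fintype.linearCombination ℂ X) from this hw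
  rw [sup_le_iff, Submodule.span_le, Submodule.span_singleton_le_iff_mem]
  refine ⟨?_, by simpa [Fintype.linearCombination_apply_single] using hX⟩
  rintro _ ⟨j, rfl⟩
  exact hIM (Ideal.subset_span ⟨j, by simp [Fintype.linearCombination_apply, smul_eq_C_mul]⟩)

theorem IM_le_ker_aeval {M : Matrix (Fin (ν - 2)) (Fin ν) ℂ} {v : Fin ν → ℂ} (hMv : M *ᵥ v = 0) :
    IM M ≤ RingHom.ker (aeval v) := by
  rw [IM, Ideal.span_le]
  rintro _ ⟨j, rfl⟩
  simpa [mulVec, dotProduct] using congr_fun hMv j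

theorem IsSqfreeMonomial.isHomogeneous {m : MvPolynomial (Fin ν) ℂ} (hm : IsSqfreeMonomial m) :
    m.IsHomogeneous m.totalDegree := by
  obtain ⟨T, rfl⟩ := hm
  have h : (∏ i ∈ T, X i : MvPolynomial (Fin ν) ℂ).IsHomogeneous T.card := by
    simpa using IsHomogeneous.prod T (fun i => X i) (fun _ => 1) fun i _ => isHomogeneous_X ℂ i
  rwa [h.totalDegree (Finset.prod_ne_zero_iff.mpr fun i _ => X_ne_zero i)]

theorem IsSqfreeMonomial.aeval_ne_zero {m : MvPolynomial (Fin ν) ℂ} (hm : IsSqfreeMonomial m)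
    {i₀ : Fin ν} (hdvd : ¬ X i₀ ∣ m) {v : Fin ν → ℂ} (hv : ∀ i, i ≠ i₀ → v i ≠ 0) :
    aeval v m ≠ 0 := by
  obtain ⟨T, rfl⟩ := hm
  have hi₀ : i₀ ∉ T := fun h => hdvd (Finset.dvd_prod_of_mem _ h)
  simpa using Finset.prod_ne_zero_iff.mpr fun i hi => hv i (ne_of_mem_of_not_mem hi hi₀)

section hdim

variable {K : Ideal (MvPolynomial (Fin ν) ℂ)} {v : Fin ν → ℂ} {a : Fin ν}

theorem hdim_eq_one (hva : v a ≠ 0) (hK : ∀ i, C (v a) * X i - C (v i) * X a ∈ K)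
    (hKv : K ≤ RingHom.ker (aeval v)) (k : ℕ) : hdim K k = 1 := by
  have hA : K.restrictScalars ℂ ⊓ homogeneousSubmodule (Fin ν) ℂ k =
      LinearMap.ker (aeval v).toLinearMap ⊓ homogeneousSubmodule (Fin ν) ℂ k := by
    ext f
    refine ⟨fun ⟨hfK, hf⟩ => ⟨hKv hfK, hf⟩, fun ⟨hfv, hf⟩ => ⟨?_, hf⟩⟩
    have hfv : aeval v f = 0 := hfv
    refine (mem_iff_C_aeval_mul_X_pow_mem_of_isHomogeneous hva.isUnit hK hf).mpr ?_
    simp [hfv]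
  have hX : X a ^ k ∈ homogeneousSubmodule (Fin ν) ℂ k := by
    simpa using (isHomogeneous_X ℂ a).pow k
  rw [hdim, hA, ← Module.Dual.finrank_ker_inf_add_one (f := (aeval v).toLinearMap) hX
    (by simp [hva])]
  simp

theorem hdim_eq_zero (hva : v a ≠ 0) (hK : ∀ i, C (v a) * X i - C (v i) * X a ∈ K)
    {m : MvPolynomial (Fin ν) ℂ} {n k : ℕ} (hm : m.IsHomogeneous n) (hmK : m ∈ K)
    (hmv : aeval v m ≠ 0) (hnk : n ≤ k) : hdim K k = 0 := by
  have hXn : X a ^ n ∈ K := (K.unit_mul_mem_iff_mem (hmv.isUnit.map C)).mp <|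
    (mem_iff_C_aeval_mul_X_pow_mem_of_isHomogeneous hva.isUnit hK hm).mp hmK
  have hXk : X a ^ k ∈ K := by
    rw [← Nat.sub_add_cancel hnk, pow_add]
    exact K.mul_mem_left _ hXn
  have hA : homogeneousSubmodule (Fin ν) ℂ k ≤ K.restrictScalars ℂ := fun f hf =>
    (mem_iff_C_aeval_mul_X_pow_mem_of_isHomogeneous hva.isUnit hK hf).mpr (K.mul_mem_left _ hXk)
  rw [hdim, inf_eq_right.mpr hA, Nat.sub_self]

end hdim

end

theorem stmt8_general (ν : ℕ) (hν : 3 ≤ ν) (M : Matrix (Fin (ν - 2)) (Fin ν) ℂ)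
    (hM : FullRankType ν M) (i₀ : Fin ν) (G : Finset (MvPolynomial (Fin ν) ℂ))
    (hGsq : ∀ p ∈ G, IsSqfreeMonomial p)
    (hi₀ : MvPolynomial.X i₀ ∈ G) :
    ((∀ p ∈ G, MvPolynomial.X i₀ ∣ p) →
      ∀ k : ℕ, hdim (Ideal.span (↑G : Set (MvPolynomial (Fin ν) ℂ)) + IM M) k = 1) ∧
    (∀ k : ℕ, (∃ m ∈ G, ¬ MvPolynomial.X i₀ ∣ m ∧ m.totalDegree ≤ k) →
      hdim (Ideal.span (↑G : Set (MvPolynomial (Fin ν) ℂ)) + IM M) k = 0) := by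
  obtain ⟨i₁, hi₁⟩ : ∃ i₁ : Fin ν, i₁ ≠ i₀ :=
    have : Nontrivial (Fin ν) := Fin.nontrivial_iff_two_le.mpr (by omega)
    exists_ne i₀
  obtain ⟨v, hv₀, hMv, hv, hspan⟩ := hM.exists_kernel_vector hi₁
  have hG : Ideal.span (↑G : Set (MvPolynomial (Fin ν) ℂ)) ≤ Ideal.span ↑G + IM M := le_sup_left
  have hIM : IM M ≤ Ideal.span ↑G + IM M := le_sup_right
  have hK := C_mul_X_sub_C_mul_X_mem (a := i₁) fun w hw =>
    linearCombination_X_mem (hG (Ideal.subset_span hi₀)) hIM (hspan w hw)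
  refine ⟨fun hdvd k => hdim_eq_one (hv i₁ hi₁) hK (sup_le ?_ (IM_le_ker_aeval hMv)) k, ?_⟩
  · rw [Ideal.span_le]
    intro p hp
    obtain ⟨q, rfl⟩ := hdvd p hp
    simp [hv₀]
  · rintro k ⟨m, hmG, hdvd, hmk⟩
    exact hdim_eq_zero (hv i₁ hi₁) hK (hGsq m hmG).isHomogeneous (hG (Ideal.subset_span hmG))
      ((hGsq m hmG).aeval_ne_zero hdvd hv) hmk

/-- Let `M` be of full rank type, `G` a nonempty finite set of squarefree monomials containing
the variable `a_{i₀}`, and `J` the ideal generated by `G`. Then: (1) if every element of `G` is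
divisible by `a_{i₀}`, then `dim_ℂ (A/(J + I_M))_k = 1` for every `k ≥ 0`; (2) if some `m ∈ G`
satisfies `a_{i₀} ∤ m` and `deg m ≤ k`, then `dim_ℂ (A/(J + I_M))_k = 0`. -/
theorem stmt8 (ν : ℕ) (hν : 3 ≤ ν) (M : Matrix (Fin (ν - 2)) (Fin ν) ℂ)
    (hM : FullRankType ν M) (i₀ : Fin ν) (G : Finset (MvPolynomial (Fin ν) ℂ))
    (hGne : G.Nonempty) (hGsq : ∀ p ∈ G, IsSqfreeMonomial p)
    (hi₀ : MvPolynomial.X i₀ ∈ G) :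
    ((∀ p ∈ G, MvPolynomial.X i₀ ∣ p) →
      ∀ k : ℕ, hdim (Ideal.span (↑G : Set (MvPolynomial (Fin ν) ℂ)) + IM M) k = 1) ∧
    (∀ k : ℕ, (∃ m ∈ G, ¬ MvPolynomial.X i₀ ∣ m ∧ m.totalDegree ≤ k) →
      hdim (Ideal.span (↑G : Set (MvPolynomial (Fin ν) ℂ)) + IM M) k = 0) :=
  stmt8_general ν hν M hM i₀ G hGsq hi₀
end

section
/- Let M be a matrix of full rank type. Let S ⊆ {1,…,ν}, set n := #S and u := ∏_{i∈S} a_i. Let G′ be a nonempty finite set of squarefree monomials in the variables {a_i : i ∉ S}, let J′ be the ideal of A generated by G′, and let J be the ideal of A generated by {u·g : g ∈ G′}. Then for every integer k ≥ n: dim_ℂ (A/(J + I_M))_k = dim_ℂ (A/(J′ + I_M))_{k−n} + n. -/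
open scoped BigOperators

/-!
Eliminating `ν - 2` of the variables with the linear forms identifies `A ⧸ I_M` with the ring
`B = ℂ[x, y]` of binary forms: there is a graded surjection `π : A → B` with kernel `I_M`, and
full rank type makes every `π aᵢ` nonzero. Hence `dim (A ⧸ (K + I_M))_k = dim (B ⧸ π K)_k` for
homogeneous `K`. Now `π J = (π u) · π J'` with `π u` a nonzero form of degree `n`, and
multiplication by `π u` maps `(π J')_{k-n}` isomorphically onto `(π J)_k`; since `dim B_k = k + 1`
grows by one in each degree, the two codimensions differ by exactly `n`.
-/

open Module MvPolynomial

attribute [local instance] MvPolynomial.gradedAlgebra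

namespace LinearMap

variable {K V W : Type*} [DivisionRing K] [AddCommGroup V] [Module K V] [AddCommGroup W]
  [Module K W] (f : V →ₗ[K] W)

theorem finrank_eq_finrank_ker_inf_add_finrank_map (p : Submodule K V) [FiniteDimensional K p] :
    finrank K p = finrank K (ker f ⊓ p : Submodule K V) + finrank K (p.map f) := by
  rw [← (f.domRestrict p).finrank_range_add_finrank_ker, range_domRestrict, add_comm,
    ker_domRestrict, ← (Submodule.comapSubtypeEquivOfLe inf_le_right).finrank_eq,
    Submodule.comap_inf, Submodule.comap_subtype_self, inf_top_eq]

theorem finrank_sub_finrank_eq_finrank_map_sub_finrank_map {p q : Submodule K V}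
    [FiniteDimensional K p] (hqp : q ≤ p) (hker : ker f ⊓ p ≤ q) :
    finrank K p - finrank K q = finrank K (p.map f) - finrank K (q.map f) := by
  have : FiniteDimensional K q := Submodule.finiteDimensional_of_le hqp
  have hkerq : ker f ⊓ q = ker f ⊓ p :=
    le_antisymm (inf_le_inf_left _ hqp) (le_inf inf_le_left hker)
  rw [f.finrank_eq_finrank_ker_inf_add_finrank_map p,
    f.finrank_eq_finrank_ker_inf_add_finrank_map q, hkerq, Nat.add_sub_add_left]

end LinearMap

namespace MvPolynomial

variable {F σ τ : Type*} [Field F]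

instance [Finite σ] (n : ℕ) : Module.Finite F (homogeneousSubmodule σ F n) :=
  Module.Finite.iff_fg.mpr (homogeneousSubmodule_fg σ F n)

theorem finrank_homogeneousSubmodule [Fintype σ] (n : ℕ) :
    finrank F (homogeneousSubmodule σ F n) = (Fintype.card σ).multichoose n := by
  classical
  have hdeg : {d : σ →₀ ℕ | d.degree = n} =
      ((Finset.univ : Finset σ).finsuppAntidiag n : Set (σ →₀ ℕ)) := by
    ext d; simp [Finsupp.degree_eq_sum]
  rw [(LinearEquiv.ofEq _ _ (homogeneousSubmodule_eq_finsupp_supported σ F n)).finrank_eq,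
    (AddMonoidAlgebra.supportedEquivFinsupp _).finrank_eq, hdeg, finrank_finsupp_self]
  simp [Finset.card_finsuppAntidiag_nat_eq_multichoose]

theorem isHomogeneous_of_homogeneousComponent_mem {I : Ideal (MvPolynomial σ F)}
    (hI : ∀ n, ∀ p ∈ I, homogeneousComponent n p ∈ I) :
    I.IsHomogeneous (homogeneousSubmodule σ F) := fun n p hp => by
  have hpn := hI n p hp
  rwa [← decomposition.decompose'_apply] at hpn

section GradedAlgHom

variable {φ : MvPolynomial σ F →ₐ[F] MvPolynomial τ F}

theorem IsHomogeneous.map_algHom (hφ : ∀ i, (φ (X i)).IsHomogeneous 1) {p : MvPolynomial σ F}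
    {n : ℕ} (hp : p.IsHomogeneous n) : (φ p).IsHomogeneous n := by
  rw [aeval_unique φ]
  simpa using hp.aeval (φ ∘ X) hφ

theorem homogeneousComponent_algHom_apply (hφ : ∀ i, (φ (X i)).IsHomogeneous 1) (n : ℕ)
    (p : MvPolynomial σ F) : homogeneousComponent n (φ p) = φ (homogeneousComponent n p) := by
  conv_lhs => rw [← sum_homogeneousComponent p]
  simp only [map_sum]
  rw [Finset.sum_congr rfl fun d _ => homogeneousComponent_of_mem
    ((homogeneousComponent_isHomogeneous d p).map_algHom hφ), Finset.sum_ite_eq]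
  split_ifs with hn
  · rfl
  · rw [homogeneousComponent_eq_zero _ _ (by simpa [Nat.lt_succ_iff] using hn), map_zero]

theorem isHomogeneous_ker (hφ : ∀ i, (φ (X i)).IsHomogeneous 1) :
    (RingHom.ker φ).IsHomogeneous (homogeneousSubmodule σ F) :=
  isHomogeneous_of_homogeneousComponent_mem fun n p hp => by
    rw [RingHom.mem_ker, ← homogeneousComponent_algHom_apply hφ, RingHom.mem_ker.mp hp, map_zero]

theorem isHomogeneous_map (hφ : ∀ i, (φ (X i)).IsHomogeneous 1) (hsurj : Function.Surjective φ)
    {J : Ideal (MvPolynomial σ F)} (hJ : J.IsHomogeneous (homogeneousSubmodule σ F)) :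
    (J.map φ).IsHomogeneous (homogeneousSubmodule τ F) :=
  isHomogeneous_of_homogeneousComponent_mem fun n _ hy => by
    obtain ⟨x, hx, rfl⟩ := (Ideal.mem_map_iff_of_surjective φ hsurj).mp hy
    rw [homogeneousComponent_algHom_apply hφ]
    exact Ideal.mem_map_of_mem φ (homogeneousComponent_mem_of_mem hJ hx n)

theorem map_inf_homogeneousSubmodule (hφ : ∀ i, (φ (X i)).IsHomogeneous 1)
    (hsurj : Function.Surjective φ) {J : Ideal (MvPolynomial σ F)}
    (hJ : J.IsHomogeneous (homogeneousSubmodule σ F)) (n : ℕ) :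
    (J.restrictScalars F ⊓ homogeneousSubmodule σ F n).map φ.toLinearMap =
      (J.map φ).restrictScalars F ⊓ homogeneousSubmodule τ F n := by
  apply le_antisymm
  · rintro _ ⟨p, ⟨hpJ, hp⟩, rfl⟩
    exact ⟨Ideal.mem_map_of_mem φ hpJ, IsHomogeneous.map_algHom hφ hp⟩
  · rintro q ⟨hqJ, hq⟩
    obtain ⟨p, hpJ, rfl⟩ := (Ideal.mem_map_iff_of_surjective φ hsurj).mp hqJ
    refine ⟨homogeneousComponent n p, ⟨homogeneousComponent_mem_of_mem hJ hpJ n,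
      homogeneousComponent_mem n p⟩, ?_⟩
    rw [AlgHom.toLinearMap_apply, ← homogeneousComponent_algHom_apply hφ,
      homogeneousComponent_of_mem hq, if_pos rfl]

theorem map_homogeneousSubmodule (hφ : ∀ i, (φ (X i)).IsHomogeneous 1)
    (hsurj : Function.Surjective φ) (n : ℕ) :
    (homogeneousSubmodule σ F n).map φ.toLinearMap = homogeneousSubmodule τ F n := by
  simpa [Ideal.map_top] using map_inf_homogeneousSubmodule hφ hsurj (Ideal.IsHomogeneous.top _) n

end GradedAlgHom

theorem isHomogeneous_prod_X (s : Finset σ) :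
    (∏ i ∈ s, X i : MvPolynomial σ F).IsHomogeneous s.card := by
  simpa using IsHomogeneous.prod s X (fun _ => 1) fun i _ => isHomogeneous_X F i

noncomputable def hilbertFunction (I : Ideal (MvPolynomial σ F)) (k : ℕ) : ℕ :=
  finrank F (homogeneousSubmodule σ F k) -
    finrank F (I.restrictScalars F ⊓ homogeneousSubmodule σ F k : Submodule F (MvPolynomial σ F))

theorem hilbertFunction_add_ker [Finite σ] {φ : MvPolynomial σ F →ₐ[F] MvPolynomial τ F}
    (hφ : ∀ i, (φ (X i)).IsHomogeneous 1) (hsurj : Function.Surjective φ)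
    {J : Ideal (MvPolynomial σ F)} (hJ : J.IsHomogeneous (homogeneousSubmodule σ F)) (k : ℕ) :
    hilbertFunction (J + RingHom.ker φ) k = hilbertFunction (J.map φ) k := by
  rw [Submodule.add_eq_sup]
  have hK := hJ.sup (isHomogeneous_ker hφ)
  have hmapK : (J ⊔ RingHom.ker φ).map φ = J.map φ := by
    rw [Ideal.map_sup, (Ideal.map_eq_bot_iff_le_ker φ).mpr le_rfl, sup_bot_eq]
  unfold hilbertFunction
  rw [φ.toLinearMap.finrank_sub_finrank_eq_finrank_map_sub_finrank_map inf_le_right,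
    map_homogeneousSubmodule hφ hsurj, map_inf_homogeneousSubmodule hφ hsurj hK, hmapK]
  rintro p ⟨hp, hpk⟩
  exact ⟨Submodule.mem_sup_right hp, hpk⟩

theorem homogeneousComponent_add_mul {u : MvPolynomial σ F} {n : ℕ} (hu : u.IsHomogeneous n)
    (m : ℕ) (p : MvPolynomial σ F) :
    homogeneousComponent (n + m) (u * p) = u * homogeneousComponent m p := by
  have h := DirectSum.coe_decompose_mul_of_left_mem_of_le (homogeneousSubmodule σ F) (b := p) hu
    (Nat.le_add_right n m)
  rw [Nat.add_sub_cancel_left] at h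
  rw [← decomposition.decompose'_apply, ← decomposition.decompose'_apply]
  exact h

theorem finrank_span_singleton_mul_inf_homogeneousSubmodule {u : MvPolynomial σ F} {n : ℕ}
    (hu : u.IsHomogeneous n) (hu0 : u ≠ 0) {I : Ideal (MvPolynomial σ F)}
    (hI : I.IsHomogeneous (homogeneousSubmodule σ F)) (m : ℕ) :
    finrank F ((Ideal.span {u} * I).restrictScalars F ⊓ homogeneousSubmodule σ F (n + m) :
        Submodule F (MvPolynomial σ F)) =
      finrank F (I.restrictScalars F ⊓ homogeneousSubmodule σ F m :
        Submodule F (MvPolynomial σ F)) := by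
  have hmul : (Ideal.span {u} * I).restrictScalars F ⊓ homogeneousSubmodule σ F (n + m) =
      (I.restrictScalars F ⊓ homogeneousSubmodule σ F m).map (LinearMap.mulLeft F u) := by
    apply le_antisymm
    · rintro x ⟨hxI, hx⟩
      obtain ⟨p, hpI, rfl⟩ := Ideal.mem_span_singleton_mul.mp hxI
      refine ⟨homogeneousComponent m p, ⟨homogeneousComponent_mem_of_mem hI hpI m,
        homogeneousComponent_mem m p⟩, ?_⟩
      rw [LinearMap.mulLeft_apply, ← homogeneousComponent_add_mul hu,
        homogeneousComponent_of_mem hx, if_pos rfl]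
    · rintro _ ⟨p, ⟨hpI, hp⟩, rfl⟩
      exact ⟨Ideal.mul_mem_mul (Ideal.mem_span_singleton_self u) hpI, hu.mul hp⟩
  rw [hmul]
  exact (Submodule.equivMapOfInjective _ (mul_right_injective₀ hu0) _).finrank_eq.symm

theorem hilbertFunction_span_singleton_mul {u : MvPolynomial (Fin 2) F} {n : ℕ}
    (hu : u.IsHomogeneous n) (hu0 : u ≠ 0) {I : Ideal (MvPolynomial (Fin 2) F)}
    (hI : I.IsHomogeneous (homogeneousSubmodule (Fin 2) F)) (m : ℕ) :
    hilbertFunction (Ideal.span {u} * I) (n + m) = hilbertFunction I m + n := by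
  have hle : finrank F (I.restrictScalars F ⊓ homogeneousSubmodule (Fin 2) F m :
      Submodule F (MvPolynomial (Fin 2) F)) ≤ finrank F (homogeneousSubmodule (Fin 2) F m) :=
    Submodule.finrank_mono inf_le_right
  simp only [hilbertFunction, finrank_span_singleton_mul_inf_homogeneousSubmodule hu hu0 hI,
    finrank_homogeneousSubmodule, Fintype.card_fin, Nat.multichoose_two] at hle ⊢
  omega

section LinearForms

variable {ι : Type*} [Fintype σ]

noncomputable def linearFormsIdeal (M : Matrix ι σ F) : Ideal (MvPolynomial σ F) :=
  Ideal.span (Set.range fun j => ∑ i, C (M j i) * X i)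

theorem linearFormsIdeal_mul_le [Fintype ι] {ι' : Type*} (A : Matrix ι' ι F)
    (M : Matrix ι σ F) :
    linearFormsIdeal (A * M) ≤ linearFormsIdeal M := by
  refine Ideal.span_le.mpr (Set.range_subset_iff.mpr fun j => ?_)
  have hrow : ∑ i, C ((A * M) j i) * X i =
      ∑ k, C (A j k) * ∑ i, C (M k i) * (X i : MvPolynomial σ F) := by
    simp only [Matrix.mul_apply, map_sum, map_mul, Finset.sum_mul, Finset.mul_sum, mul_assoc]
    exact Finset.sum_comm
  rw [SetLike.mem_coe, hrow]
  exact Ideal.sum_mem _ fun k _ => Ideal.mul_mem_left _ _ (Ideal.subset_span ⟨k, rfl⟩)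

theorem linearFormsIdeal_nonsing_inv_mul [Fintype ι] [DecidableEq ι] {A : Matrix ι ι F}
    (hA : IsUnit A.det) (M : Matrix ι σ F) : linearFormsIdeal (A⁻¹ * M) = linearFormsIdeal M := by
  refine le_antisymm (linearFormsIdeal_mul_le _ _) ?_
  calc linearFormsIdeal M = linearFormsIdeal (A * (A⁻¹ * M)) := by
        rw [← Matrix.mul_assoc, Matrix.mul_nonsing_inv _ hA, Matrix.one_mul]
    _ ≤ linearFormsIdeal (A⁻¹ * M) := linearFormsIdeal_mul_le _ _

end LinearForms

section Elimination

variable {ι κ : Type*} [Fintype κ] (e : ι ⊕ κ ≃ σ)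

-- For `M` normalised to the identity on the columns `e ∘ inl`, row `t` solves for `X (e (inl t))`.
noncomputable def eliminate (M : Matrix ι σ F) : MvPolynomial σ F →ₐ[F] MvPolynomial κ F :=
  aeval fun i => Sum.elim (fun t => -∑ b, C (M t (e (.inr b))) * X b) X (e.symm i)

variable (M : Matrix ι σ F)

@[simp]
theorem eliminate_X_inl (t : ι) :
    eliminate e M (X (e (.inl t))) = -∑ b, C (M t (e (.inr b))) * X b := by
  simp [eliminate]

@[simp]
theorem eliminate_X_inr (b : κ) : eliminate e M (X (e (.inr b))) = X b := by
  simp [eliminate]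

theorem isHomogeneous_eliminate_X (i : σ) : (eliminate e M (X i)).IsHomogeneous 1 := by
  obtain ⟨t | b, rfl⟩ := e.surjective i
  · rw [eliminate_X_inl]
    exact (IsHomogeneous.sum _ _ _ fun b _ => isHomogeneous_C_mul_X _ b).neg
  · rw [eliminate_X_inr]
    exact isHomogeneous_X F b

theorem eliminate_comp_rename : (eliminate e M).comp (rename (e ∘ .inr)) = AlgHom.id F _ :=
  algHom_ext fun b => by simp

theorem eliminate_surjective : Function.Surjective (eliminate e M) :=
  Function.LeftInverse.surjective fun q => DFunLike.congr_fun (eliminate_comp_rename e M) q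

variable {e M}

theorem linearForm_eq_of_submatrix_eq_one [Fintype ι] [Fintype σ] [DecidableEq ι]
    (hM : M.submatrix id (e ∘ .inl) = 1) (j : ι) :
    ∑ i, C (M j i) * X i =
      X (e (.inl j)) + ∑ b, C (M j (e (.inr b))) * (X (e (.inr b)) : MvPolynomial σ F) := by
  have hpivot : ∀ t, M j (e (.inl t)) = if j = t then 1 else 0 := fun t => by
    simpa [Matrix.one_apply] using congrFun (congrFun hM j) t
  rw [← e.sum_comp, Fintype.sum_sum_type]
  simp [hpivot]

theorem ker_eliminate [Fintype ι] [Fintype σ] [DecidableEq ι]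
    (hM : M.submatrix id (e ∘ .inl) = 1) :
    RingHom.ker (eliminate e M) = linearFormsIdeal M := by
  apply le_antisymm
  · intro p hp
    have hX : ∀ i, X i - rename (e ∘ .inr) (eliminate e M (X i)) ∈ linearFormsIdeal M := by
      intro i
      obtain ⟨t | b, rfl⟩ := e.surjective i
      · have hrow : X (e (.inl t)) - rename (e ∘ .inr) (eliminate e M (X (e (.inl t)))) =
            ∑ i, C (M t i) * X i := by
          simp [linearForm_eq_of_submatrix_eq_one hM]
        rw [hrow]
        exact Ideal.subset_span ⟨t, rfl⟩
      · simp
    have hmk : (Ideal.Quotient.mkₐ F (linearFormsIdeal M)).comp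
        ((rename (e ∘ .inr)).comp (eliminate e M)) = Ideal.Quotient.mkₐ F _ :=
      algHom_ext fun i => (Ideal.Quotient.eq.mpr (hX i)).symm
    have := congr($hmk p)
    simpa [RingHom.mem_ker.mp hp, Ideal.Quotient.eq_zero_iff_mem] using this.symm
  · refine Ideal.span_le.mpr (Set.range_subset_iff.mpr fun j => ?_)
    rw [SetLike.mem_coe, RingHom.mem_ker, linearForm_eq_of_submatrix_eq_one hM]
    simp

theorem ker_eliminate_nonsing_inv_mul [Fintype ι] [Fintype σ] [DecidableEq ι]
    (hN : IsUnit (M.submatrix id (e ∘ .inl)).det) :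
    RingHom.ker (eliminate e ((M.submatrix id (e ∘ .inl))⁻¹ * M)) = linearFormsIdeal M := by
  have hpivot : ((M.submatrix id (e ∘ .inl))⁻¹ * M).submatrix id (e ∘ .inl) = 1 := by
    rw [Matrix.submatrix_mul _ _ _ id _ Function.bijective_id, Matrix.submatrix_id_id,
      Matrix.nonsing_inv_mul _ hN]
  rw [ker_eliminate hpivot, linearFormsIdeal_nonsing_inv_mul hN]

end Elimination

end MvPolynomial

section FullRankType

variable {ν : ℕ} {M : Matrix (Fin (ν - 2)) (Fin ν) ℂ}

theorem FullRankType.isUnit_det_submatrix (hM : FullRankType ν M) {κ : Type*}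
    (e : Fin (ν - 2) ⊕ κ ≃ Fin ν) : IsUnit (M.submatrix id (e ∘ Sum.inl)).det :=
  (hM ⟨e ∘ Sum.inl, e.injective.comp Sum.inl_injective⟩).isUnit

theorem FullRankType.ker_eliminate (hM : FullRankType ν M) {κ : Type*} [Fintype κ]
    (e : Fin (ν - 2) ⊕ κ ≃ Fin ν) :
    RingHom.ker (eliminate e ((M.submatrix id (e ∘ Sum.inl))⁻¹ * M)) = IM M :=
  ker_eliminate_nonsing_inv_mul (hM.isUnit_det_submatrix e)

def finSumFinTwoEquiv (hν : 2 ≤ ν) : Fin (ν - 2) ⊕ Fin 2 ≃ Fin ν :=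
  finSumFinEquiv.trans (finCongr (Nat.sub_add_cancel hν))

theorem FullRankType.X_notMem_IM (hM : FullRankType ν M) (hν : 2 ≤ ν) (c : Fin ν) :
    X c ∉ IM M := by
  -- With the pivots chosen away from `c`, elimination sends `X c` to a variable.
  let e := (finSumFinTwoEquiv hν).trans (Equiv.swap (finSumFinTwoEquiv hν (.inr 0)) c)
  have hc : e (.inr 0) = c := by simp [e]
  rw [← hM.ker_eliminate e, RingHom.mem_ker, ← hc, eliminate_X_inr]
  exact X_ne_zero 0

end FullRankType

theorem stmt9_general (ν : ℕ) (hν : 3 ≤ ν) (M : Matrix (Fin (ν - 2)) (Fin ν) ℂ)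
    (hM : FullRankType ν M) (S : Finset (Fin ν))
    (G' : Finset (MvPolynomial (Fin ν) ℂ))
    (hG'sq : ∀ p ∈ G', ∃ T : Finset (Fin ν), T ⊆ Sᶜ ∧ p = ∏ i ∈ T, MvPolynomial.X i)
    (k : ℕ) (hk : S.card ≤ k) :
    hdim (Ideal.span ((fun g => (∏ i ∈ S, MvPolynomial.X i) * g) ''
        (↑G' : Set (MvPolynomial (Fin ν) ℂ))) + IM M) k =
      hdim (Ideal.span (↑G' : Set (MvPolynomial (Fin ν) ℂ)) + IM M) (k - S.card) + S.card := by
  obtain ⟨m, rfl⟩ := Nat.exists_eq_add_of_le hk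
  rw [Nat.add_sub_cancel_left]
  have hν2 : 2 ≤ ν := by omega
  set u : MvPolynomial (Fin ν) ℂ := ∏ i ∈ S, X i
  let e := finSumFinTwoEquiv hν2
  let π := eliminate e ((M.submatrix id (e ∘ Sum.inl))⁻¹ * M)
  have hπ : ∀ i, (π (X i)).IsHomogeneous 1 := isHomogeneous_eliminate_X e _
  have hπsurj : Function.Surjective π := eliminate_surjective e _
  have hπu : π u ≠ 0 := by
    refine (map_prod π _ S).trans_ne (Finset.prod_ne_zero_iff.mpr fun i _ hi => ?_)
    exact hM.X_notMem_IM hν2 i (by rwa [← hM.ker_eliminate e, RingHom.mem_ker])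
  have hJ' : (Ideal.span (G' : Set (MvPolynomial (Fin ν) ℂ))).IsHomogeneous
      (homogeneousSubmodule (Fin ν) ℂ) := Ideal.homogeneous_span _ _ fun p hp => by
    obtain ⟨T, -, rfl⟩ := hG'sq p hp
    exact ⟨T.card, isHomogeneous_prod_X T⟩
  have hU : (Ideal.span {u}).IsHomogeneous (homogeneousSubmodule (Fin ν) ℂ) :=
    Ideal.homogeneous_span _ _ fun _ hp =>
      ⟨S.card, Set.mem_singleton_iff.mp hp ▸ isHomogeneous_prod_X S⟩
  have hJ : Ideal.span ((u * ·) '' G') = Ideal.span {u} * Ideal.span G' := by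
    rw [Ideal.span_mul_span', Set.singleton_mul]
  change hilbertFunction _ _ = hilbertFunction _ _ + _
  rw [hJ, ← hM.ker_eliminate e, hilbertFunction_add_ker hπ hπsurj (hU.mul hJ'),
    hilbertFunction_add_ker hπ hπsurj hJ', Ideal.map_mul, Ideal.map_span, Set.image_singleton,
    hilbertFunction_span_singleton_mul ((isHomogeneous_prod_X S).map_algHom hπ) hπu
      (isHomogeneous_map hπ hπsurj hJ')]

/-- Let `M` be of full rank type, `S ⊆ {1,…,ν}`, `n := #S`, `u := ∏_{i∈S} a_i`. Let `G′` be a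
nonempty finite set of squarefree monomials in the variables `{a_i : i ∉ S}`, `J′` the ideal
generated by `G′` and `J` the ideal generated by `{u·g : g ∈ G′}`. Then for every `k ≥ n`:
`dim_ℂ (A/(J + I_M))_k = dim_ℂ (A/(J′ + I_M))_{k−n} + n`. -/
theorem stmt9 (ν : ℕ) (hν : 3 ≤ ν) (M : Matrix (Fin (ν - 2)) (Fin ν) ℂ)
    (hM : FullRankType ν M) (S : Finset (Fin ν))
    (G' : Finset (MvPolynomial (Fin ν) ℂ)) (hG'ne : G'.Nonempty)
    (hG'sq : ∀ p ∈ G', ∃ T : Finset (Fin ν), T ⊆ Sᶜ ∧ p = ∏ i ∈ T, MvPolynomial.X i)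
    (k : ℕ) (hk : S.card ≤ k) :
    hdim (Ideal.span ((fun g => (∏ i ∈ S, MvPolynomial.X i) * g) ''
        (↑G' : Set (MvPolynomial (Fin ν) ℂ))) + IM M) k =
      hdim (Ideal.span (↑G' : Set (MvPolynomial (Fin ν) ℂ)) + IM M) (k - S.card) + S.card :=
  stmt9_general ν hν M hM S G' hG'sq k hk
end

section
/- Assume b_0 ≥ ν. For an integer l ≥ 1 set m̃_l := #{i ∈ {1,…,ν} : ε_{i,(l_1,l_2)} = 0 for every (l_1,l_2) ∈ Λ_l}. Then s_l ≥ ν − m̃_l. (In particular, since every variable counted by m̃_l is absent from every monomial of X_l, one has s_l ≥ ν − m_l, where m_l is the number of variables not appearing in a minimal monomial generating set of the ideal J(l).) -/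
open scoped BigOperators

/-- `ε_{i,(l₁,l₂)} := {l₁·β_i/α_i} + {l₂·β_i/α_i} − {(l₁+l₂)·β_i/α_i}`. -/
noncomputable def epsQ (ν : ℕ) (α β : Fin ν → ℤ) (i : Fin ν) (l₁ l₂ : ℤ) : ℚ :=
  Int.fract (((l₁ * β i : ℤ) : ℚ) / (α i : ℚ)) + Int.fract (((l₂ * β i : ℤ) : ℚ) / (α i : ℚ)) -
    Int.fract ((((l₁ + l₂) * β i : ℤ) : ℚ) / (α i : ℚ))

/-!
Since `b₀ ≥ ν`, `s_l ≥ Σ_i (l − ⌈l ω_i/α_i⌉)`, and every summand is nonnegative. A summand is at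
least one as soon as `α_i ≤ l β_i`; otherwise all of `l₁ β_i, l₂ β_i, l β_i` lie in `[0, α_i)`, so
the fractional parts are the quotients themselves and every `ε_{i,(l₁,l₂)}` vanishes.
-/

lemma Int.fract_intCast_div_intCast_of_lt {x a : ℤ} (hx : 0 ≤ x) (hxa : x < a) :
    Int.fract ((x : ℚ) / a) = x / a := by
  have ha : (0 : ℚ) < a := by exact_mod_cast hx.trans_lt hxa
  refine Int.fract_eq_self.mpr ⟨by positivity, ?_⟩
  rw [div_lt_one ha]
  exact_mod_cast hxa

lemma epsQ_eq_zero_of_mul_lt {ν : ℕ} {α β : Fin ν → ℤ} {i : Fin ν} {l₁ l₂ : ℤ}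
    (h₁ : 0 ≤ l₁) (h₂ : 0 ≤ l₂) (hβ : 0 ≤ β i) (hlt : (l₁ + l₂) * β i < α i) :
    epsQ ν α β i l₁ l₂ = 0 := by
  have hle₁ : l₁ * β i ≤ (l₁ + l₂) * β i := by nlinarith
  have hle₂ : l₂ * β i ≤ (l₁ + l₂) * β i := by nlinarith
  rw [epsQ, Int.fract_intCast_div_intCast_of_lt (by positivity) (hle₁.trans_lt hlt),
    Int.fract_intCast_div_intCast_of_lt (by positivity) (hle₂.trans_lt hlt),
    Int.fract_intCast_div_intCast_of_lt (by positivity) hlt]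
  push_cast
  ring

lemma ceil_mul_div_le {l ω a : ℤ} (hl : 0 ≤ l) (ha : 0 < a) (hω : ω ≤ a) :
    ⌈((l * ω : ℤ) : ℚ) / a⌉ ≤ l := by
  rw [Int.ceil_le, div_le_iff₀ (by exact_mod_cast ha)]
  exact_mod_cast mul_le_mul_of_nonneg_left hω hl

lemma ceil_mul_div_le_sub_one {l ω a : ℤ} (ha : 0 < a) (h : a ≤ l * (a - ω)) :
    ⌈((l * ω : ℤ) : ℚ) / a⌉ ≤ l - 1 := by
  rw [Int.ceil_le, div_le_iff₀ (by exact_mod_cast ha)]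
  have : l * ω ≤ (l - 1) * a := by linarith
  exact_mod_cast this

lemma card_sub_ncard_le_sum {ι : Type*} [Fintype ι] (S : Set ι) (f : ι → ℤ)
    (hf : ∀ i, 0 ≤ f i) (hfS : ∀ i ∉ S, 1 ≤ f i) :
    (Fintype.card ι : ℤ) - S.ncard ≤ ∑ i, f i := by
  classical
  have hcompl : (Fintype.card ι : ℤ) - S.ncard = (Sᶜ.toFinset.card : ℤ) := by
    rw [← Set.ncard_eq_toFinset_card', ← Nat.card_eq_fintype_card,
      ← Set.ncard_add_ncard_compl S]
    push_cast
    ring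
  calc (Fintype.card ι : ℤ) - S.ncard = ∑ _i ∈ Sᶜ.toFinset, (1 : ℤ) := by simp [hcompl]
    _ ≤ ∑ i ∈ Sᶜ.toFinset, f i := Finset.sum_le_sum fun i hi => hfS i (by simpa using hi)
    _ ≤ ∑ i, f i := Finset.sum_le_sum_of_subset_of_nonneg (Finset.subset_univ _)
        fun i _ _ => hf i

theorem stmt13_general (ν : ℕ) (b0 : ℤ) (α ω : Fin ν → ℤ)
    (hω : ∀ i, 0 < ω i) (hωα : ∀ i, ω i < α i)
    (β : Fin ν → ℤ) (hβ : ∀ i, β i = α i - ω i)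
    (hb0 : (ν : ℤ) ≤ b0) (l : ℤ) (hl : 1 ≤ l)
    (mt : ℕ)
    (hmt : mt = Set.ncard {i : Fin ν | ∀ l₁ l₂ : ℤ, 1 ≤ l₁ → 1 ≤ l₂ → l₁ + l₂ = l →
      0 ≤ sVal ν b0 α ω l₁ → 0 ≤ sVal ν b0 α ω l₂ → epsQ ν α β i l₁ l₂ = 0}) :
    (ν : ℤ) - mt ≤ sVal ν b0 α ω l := by
  have hα : ∀ i, 0 < α i := fun i => (hω i).trans (hωα i)
  have hlarge : ∀ i ∉ {i : Fin ν | ∀ l₁ l₂ : ℤ, 1 ≤ l₁ → 1 ≤ l₂ → l₁ + l₂ = l →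
      0 ≤ sVal ν b0 α ω l₁ → 0 ≤ sVal ν b0 α ω l₂ → epsQ ν α β i l₁ l₂ = 0},
      α i ≤ l * (α i - ω i) := by
    intro i hi
    by_contra! hlt
    refine hi fun l₁ l₂ h₁ h₂ hsum _ _ => epsQ_eq_zero_of_mul_lt (by omega) (by omega) ?_ ?_
    · linarith [hβ i, hωα i]
    · rwa [hsum, hβ i]
  have hcount := card_sub_ncard_le_sum _ (fun i => l - ⌈((l * ω i : ℤ) : ℚ) / (α i : ℚ)⌉)
    (fun i => sub_nonneg.mpr (ceil_mul_div_le (by omega) (hα i) (hωα i).le))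
    (fun i hi => by linarith [ceil_mul_div_le_sub_one (hα i) (hlarge i hi)])
  rw [Fintype.card_fin, ← hmt, Finset.sum_sub_distrib] at hcount
  have hνl : (ν : ℤ) * l ≤ l * b0 := by nlinarith
  simp only [Finset.sum_const, Finset.card_univ, Fintype.card_fin, nsmul_eq_mul] at hcount
  unfold sVal
  linarith

/-- Assume `b₀ ≥ ν`. For `l ≥ 1` let `m̃_l` be the number of indices `i` such that
`ε_{i,(l₁,l₂)} = 0` for every `(l₁,l₂) ∈ Λ_l`. Then `s_l ≥ ν − m̃_l`. -/
theorem stmt13 (ν : ℕ) (hν : 3 ≤ ν) (b0 : ℤ) (α ω : Fin ν → ℤ)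
    (hω : ∀ i, 0 < ω i) (hωα : ∀ i, ω i < α i) (hcop : ∀ i, Int.gcd (α i) (ω i) = 1)
    (e : ℚ) (he : e = -(b0 : ℚ) + ∑ i, (ω i : ℚ) / (α i : ℚ)) (hneg : e < 0)
    (β : Fin ν → ℤ) (hβ : ∀ i, β i = α i - ω i)
    (hb0 : (ν : ℤ) ≤ b0) (l : ℤ) (hl : 1 ≤ l)
    (mt : ℕ)
    (hmt : mt = Set.ncard {i : Fin ν | ∀ l₁ l₂ : ℤ, 1 ≤ l₁ → 1 ≤ l₂ → l₁ + l₂ = l →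
      0 ≤ sVal ν b0 α ω l₁ → 0 ≤ sVal ν b0 α ω l₂ → epsQ ν α β i l₁ l₂ = 0}) :
    (ν : ℤ) - mt ≤ sVal ν b0 α ω l :=
  stmt13_general ν b0 α ω hω hωα β hβ hb0 l hl mt hmt
end

section
/- Let 0 < β < α be coprime integers, r ≥ 1 an integer, and u_1,…,u_r integers with u_k ≥ 2 for all k. Define sequences p_0 = 1, p_1 = u_1, p_{k+1} = u_{k+1}·p_k − p_{k−1} and q_0 = 0, q_1 = 1, q_{k+1} = u_{k+1}·q_k − q_{k−1}, and assume p_r = α and q_r = β (i.e. α/β = cf[u_1,…,u_r] is the negative continued fraction expansion). Then for every integer l ≥ 2: l ∈ {p_1,…,p_r} if and only if {j·β/α} + {(l−j)·β/α} − {l·β/α} = 1 for every integer j with 1 ≤ j ≤ l−1. -/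
/-
Put `t_k = p_k β - q_k α`. The unimodularity `p_k q_{k+1} - p_{k+1} q_k = 1` and `u_k ≥ 2` make
`p_0 < p_1 < ⋯ < p_r = α` increase from `1` and `t_0 > t_1 > ⋯ > t_r = 0` decrease from `β`, so
`t_k` is the residue of `p_k β` modulo `α`. The fractional-part identity says exactly that
adding `jβ` and `(l - j)β` produces a carry modulo `α`, i.e. `lβ mod α < jβ mod α`, so it holds for
all `0 < j < l` iff `l` is a new minimum of `m ↦ mβ mod α`. These records are the `p_k`: writing
`(m, ⌊mβ/α⌋)` in the basis `(p_k, q_k), (p_{k+1}, q_{k+1})` shows `mβ mod α ≥ t_k` for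
`1 ≤ m < p_{k+1}`.
-/

/-- Numerators `p_k` of the convergents of the negative continued fraction `cf[u_1,…]`:
`p_0 = 1`, `p_1 = u_1`, `p_{k+1} = u_{k+1}·p_k − p_{k−1}` (here `u k` stands for `u_{k+1}`). -/
def cfP (u : ℕ → ℤ) : ℕ → ℤ
  | 0 => 1
  | 1 => u 0
  | k + 2 => u (k + 1) * cfP u (k + 1) - cfP u k

/-- Denominators `q_k` of the convergents: `q_0 = 0`, `q_1 = 1`,
`q_{k+1} = u_{k+1}·q_k − q_{k−1}`. -/
def cfQ (u : ℕ → ℤ) : ℕ → ℤ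
  | 0 => 0
  | 1 => 1
  | k + 2 => u (k + 1) * cfQ u (k + 1) - cfQ u k

theorem lt_mul_sub_of_two_le {u a b : ℤ} (hu : 2 ≤ u) (hb : 0 ≤ b) (hab : a < b) :
    b < u * b - a := by
  nlinarith

theorem exists_lt_le_succ_of_lt_of_le {α : Type*} [LinearOrder α] (f : ℕ → α) {l : α}
    (h0 : f 0 < l) : ∀ {r : ℕ}, l ≤ f r → ∃ k < r, f k < l ∧ l ≤ f (k + 1)
  | 0, hr => absurd hr (not_le.2 h0)
  | r + 1, hr => by
    by_cases hl : l ≤ f r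
    · obtain ⟨k, hk, h⟩ := exists_lt_le_succ_of_lt_of_le f h0 hl
      exact ⟨k, by omega, h⟩
    · exact ⟨r, r.lt_succ_self, not_le.1 hl, hr⟩

theorem le_mul_add_mul_of_mem_Ico {P₀ P₁ T₀ T₁ a b : ℤ} (hP₀ : 1 ≤ P₀) (hP : P₀ < P₁)
    (hT₁ : 0 ≤ T₁) (hT : T₁ < T₀) (hlo : 1 ≤ a * P₀ + b * P₁) (hhi : a * P₀ + b * P₁ < P₁)
    (hnonneg : 0 ≤ a * T₀ + b * T₁) : T₀ ≤ a * T₀ + b * T₁ := by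
  -- `b ≥ 1` forces `a ≤ -b`, making the combination negative; `b ≤ 0` forces `a + b ≥ 1`.
  rcases le_or_gt 1 b with hb | hb
  · have hab : a + b - 1 < 0 := by
      by_contra! h
      nlinarith [mul_le_mul_of_nonneg_left hP.le (sub_nonneg.2 hb)]
    nlinarith
  · have hab : 1 ≤ a + b := by
      by_contra! h
      nlinarith [mul_le_mul_of_nonpos_left hP.le (Int.lt_add_one_iff.1 hb)]
    nlinarith

theorem le_of_forall_emod_lt {a : ℤ} (ha : 0 < a) (x l : ℤ)
    (H : ∀ j, 1 ≤ j → j ≤ l - 1 → l * x % a < j * x % a) : l ≤ a := by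
  by_contra! hal
  have h := H (l - a) (by omega) (by omega)
  rw [show (l - a) * x = l * x + a * -x by ring, Int.add_mul_emod_self_left] at h
  exact lt_irrefl _ h

namespace Int

variable {k : Type*} [Field k] [LinearOrder k] [IsStrictOrderedRing k] [FloorRing k]

theorem fract_div_intCast_eq_div_intCast_emod {a : ℤ} (ha : 0 ≤ a) (m : ℤ) :
    fract ((m : k) / a) = ((m % a : ℤ) : k) / a := by
  lift a to ℕ using ha
  simpa using fract_div_intCast_eq_div_intCast_mod (k := k) (m := m) (n := a)

theorem fract_add_fract_sub_fract_eq_one_iff {a : ℤ} (ha : 0 < a) (x z : ℤ) :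
    fract ((x : k) / a) + fract (((z - x : ℤ) : k) / a) - fract ((z : k) / a) = 1 ↔
      z % a < x % a := by
  have haK : (a : k) ≠ 0 := by exact_mod_cast ha.ne'
  simp only [fract_div_intCast_eq_div_intCast_emod ha.le]
  rw [← add_div, ← sub_div, div_eq_one_iff_eq haK]
  norm_cast
  have hx₀ := emod_nonneg x ha.ne'
  have hx₁ := emod_lt_of_pos x ha
  have hy₀ := emod_nonneg (z - x) ha.ne'
  have hy₁ := emod_lt_of_pos (z - x) ha
  have hsum : (x % a + (z - x) % a) % a = z % a := by
    rw [← add_emod, add_sub_cancel]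
  rcases lt_or_ge (x % a + (z - x) % a) a with hlt | hge
  · rw [emod_eq_of_lt (add_nonneg hx₀ hy₀) hlt] at hsum
    constructor <;> intro h <;> linarith
  · have hwrap : (x % a + (z - x) % a - a + a * 1) % a = x % a + (z - x) % a - a := by
      rw [add_mul_emod_self_left, emod_eq_of_lt (by linarith) (by linarith)]
    rw [mul_one, sub_add_cancel, hsum] at hwrap
    constructor <;> intro h <;> linarith

end Int

section ContinuedFraction

variable {u : ℕ → ℤ} {r : ℕ}

theorem cfP_mul_cfQ_succ_sub (u : ℕ → ℤ) (k : ℕ) :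
    cfP u k * cfQ u (k + 1) - cfP u (k + 1) * cfQ u k = 1 := by
  induction k with
  | zero => simp [cfP, cfQ]
  | succ k ih => rw [cfP.eq_3, cfQ.eq_3]; linear_combination ih

theorem cfP_strictMonoOn (hu : ∀ k < r, 2 ≤ u k) : StrictMonoOn (cfP u) (Set.Iic r) := by
  have h : ∀ k < r, 1 ≤ cfP u k ∧ cfP u k < cfP u (k + 1) := by
    intro k hk
    induction k with
    | zero => exact ⟨le_rfl, show (1 : ℤ) < u 0 by linarith [hu 0 hk]⟩
    | succ k ih =>
      obtain ⟨h1, h2⟩ := ih (by omega)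
      refine ⟨by linarith, ?_⟩
      rw [cfP.eq_3]
      exact lt_mul_sub_of_two_le (hu _ hk) (by linarith) h2
  exact strictMonoOn_Iic_of_lt_succ fun k hk => by simpa using (h k hk).2

theorem one_le_cfP (hu : ∀ k < r, 2 ≤ u k) {k : ℕ} (hk : k ≤ r) : 1 ≤ cfP u k :=
  (cfP_strictMonoOn hu).monotoneOn (Set.mem_Iic.2 (Nat.zero_le r)) hk (Nat.zero_le k)

/-- For `α/β = cf[u_1,…,u_r]` this is `p_k β - q_k α`, the residue of `p_k β` modulo `α`. -/
def cfRem (u : ℕ → ℤ) (r k : ℕ) : ℤ := cfP u k * cfQ u r - cfQ u k * cfP u r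

theorem cfRem_add_two (u : ℕ → ℤ) (r k : ℕ) :
    cfRem u r (k + 2) = u (k + 1) * cfRem u r (k + 1) - cfRem u r k := by
  simp only [cfRem, cfP.eq_3, cfQ.eq_3]; ring

theorem cfRem_strictAntiOn (hu : ∀ k < r, 2 ≤ u k) : StrictAntiOn (cfRem u r) (Set.Iic r) := by
  refine strictAntiOn_Iic_of_succ_lt fun m hm => ?_
  obtain ⟨n, rfl⟩ : ∃ n, r = n + 1 := ⟨r - 1, by omega⟩
  have h : ∀ k ≤ n, 0 ≤ cfRem u (n + 1) (k + 1) ∧ cfRem u (n + 1) (k + 1) < cfRem u (n + 1) k := by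
    intro k hk
    induction hk using Nat.decreasingInduction with
    | self =>
      have := cfP_mul_cfQ_succ_sub u n
      simp only [cfRem]; constructor <;> linarith
    | of_succ k hk ih =>
      have hnonneg := ih.1.trans ih.2.le
      refine ⟨hnonneg, ?_⟩
      have hstep := lt_mul_sub_of_two_le (hu (k + 1) (by omega)) hnonneg ih.2
      linarith [cfRem_add_two u (n + 1) k]
  simpa using (h m (by omega)).2

theorem cfRem_nonneg (hu : ∀ k < r, 2 ≤ u k) {k : ℕ} (hk : k ≤ r) : 0 ≤ cfRem u r k := by
  have h := (cfRem_strictAntiOn hu).antitoneOn (Set.mem_Iic.2 hk) (Set.mem_Iic.2 le_rfl) hk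
  simpa [cfRem, mul_comm] using h

theorem cfRem_le_cfQ (hu : ∀ k < r, 2 ≤ u k) {k : ℕ} (hk : k ≤ r) : cfRem u r k ≤ cfQ u r := by
  have h := (cfRem_strictAntiOn hu).antitoneOn (Set.mem_Iic.2 (Nat.zero_le r)) (Set.mem_Iic.2 hk)
    (Nat.zero_le k)
  simpa [cfRem, cfP, cfQ] using h

theorem cfP_mul_emod (hu : ∀ k < r, 2 ≤ u k) (hqp : cfQ u r < cfP u r) {k : ℕ} (hk : k ≤ r) :
    cfP u k * cfQ u r % cfP u r = cfRem u r k := by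
  rw [show cfP u k * cfQ u r = cfRem u r k + cfQ u k * cfP u r by simp only [cfRem]; ring,
    Int.add_mul_emod_self_right]
  exact Int.emod_eq_of_lt (cfRem_nonneg hu hk) ((cfRem_le_cfQ hu hk).trans_lt hqp)

theorem cfRem_le_emod (hu : ∀ k < r, 2 ≤ u k) {k : ℕ} (hk : k < r) {m : ℤ} (hm : 1 ≤ m)
    (hmk : m < cfP u (k + 1)) : cfRem u r k ≤ m * cfQ u r % cfP u r := by
  set n := m * cfQ u r / cfP u r
  -- `(a, b)` are the coordinates of `(m, n)` in the basis `(p_k, q_k), (p_{k+1}, q_{k+1})`.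
  set a := m * cfQ u (k + 1) - n * cfP u (k + 1)
  set b := n * cfP u k - m * cfQ u k
  have hdet := cfP_mul_cfQ_succ_sub u k
  have hP : a * cfP u k + b * cfP u (k + 1) = m := by linear_combination m * hdet
  have hT : a * cfRem u r k + b * cfRem u r (k + 1) = m * cfQ u r % cfP u r := by
    rw [Int.emod_def]; simp only [cfRem]; linear_combination (m * cfQ u r - n * cfP u r) * hdet
  have hp := cfP_strictMonoOn hu (Set.mem_Iic.2 hk.le) (Set.mem_Iic.2 hk) (Nat.lt_add_one k)
  have ht := cfRem_strictAntiOn hu (Set.mem_Iic.2 hk.le) (Set.mem_Iic.2 hk) (Nat.lt_add_one k)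
  rw [← hT]
  refine le_mul_add_mul_of_mem_Ico (one_le_cfP hu hk.le) hp (cfRem_nonneg hu hk) ht
    (hP ▸ hm) (hP ▸ hmk) (hT ▸ Int.emod_nonneg _ (ne_of_gt (one_le_cfP hu le_rfl)))

theorem cfP_mul_emod_lt (hu : ∀ k < r, 2 ≤ u k) (hqp : cfQ u r < cfP u r) {k : ℕ}
    (hk : k + 1 ≤ r) {j : ℤ} (hj : 1 ≤ j) (hjk : j < cfP u (k + 1)) :
    cfP u (k + 1) * cfQ u r % cfP u r < j * cfQ u r % cfP u r := by
  rw [cfP_mul_emod hu hqp hk]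
  exact (cfRem_strictAntiOn hu (Set.mem_Iic.2 (Nat.le_of_succ_le hk)) (Set.mem_Iic.2 hk)
    (Nat.lt_add_one k)).trans_le (cfRem_le_emod hu hk hj hjk)

theorem exists_cfP_eq_of_forall_emod_lt (hu : ∀ k < r, 2 ≤ u k) (hqp : cfQ u r < cfP u r)
    {l : ℤ} (hl : 2 ≤ l)
    (H : ∀ j, 1 ≤ j → j ≤ l - 1 → l * cfQ u r % cfP u r < j * cfQ u r % cfP u r) :
    ∃ k, 1 ≤ k ∧ k ≤ r ∧ cfP u k = l := by
  have h0 : cfP u 0 < l := by simp only [cfP]; omega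
  obtain ⟨k, hkr, hlo, hhi⟩ := exists_lt_le_succ_of_lt_of_le (cfP u) h0
    (le_of_forall_emod_lt (one_le_cfP hu le_rfl) _ _ H)
  refine ⟨k + 1, by omega, hkr, le_antisymm ?_ hhi⟩
  by_contra! hlt
  have h := H (cfP u k) (one_le_cfP hu hkr.le) (by omega)
  rw [cfP_mul_emod hu hqp hkr.le] at h
  exact (cfRem_le_emod hu hkr (by omega) hlt).not_gt h

end ContinuedFraction

theorem stmt16_general (α β : ℤ) (hβα : β < α)
    (r : ℕ) (u : ℕ → ℤ) (hu : ∀ k < r, 2 ≤ u k)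
    (hP : cfP u r = α) (hQ : cfQ u r = β)
    (l : ℤ) (hl : 2 ≤ l) :
    (∃ k : ℕ, 1 ≤ k ∧ k ≤ r ∧ cfP u k = l) ↔
      (∀ j : ℤ, 1 ≤ j → j ≤ l - 1 →
        Int.fract (((j * β : ℤ) : ℚ) / (α : ℚ)) +
          Int.fract ((((l - j) * β : ℤ) : ℚ) / (α : ℚ)) -
          Int.fract (((l * β : ℤ) : ℚ) / (α : ℚ)) = 1) := by
  subst hP hQ
  have hfract (j : ℤ) := Int.fract_add_fract_sub_fract_eq_one_iff (k := ℚ)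
    (one_le_cfP hu le_rfl) (j * cfQ u r) (l * cfQ u r)
  simp only [← sub_mul] at hfract
  simp only [hfract]
  constructor
  · rintro ⟨_ | k, hk, hkr, rfl⟩ j hj hjl
    · omega
    · exact cfP_mul_emod_lt hu hβα hkr hj (by omega)
  · exact exists_cfP_eq_of_forall_emod_lt hu hβα hl

/-- Let `0 < β < α` be coprime with negative continued fraction expansion
`α/β = cf[u_1,…,u_r]` (all `u_k ≥ 2`). Then for every integer `l ≥ 2`:
`l ∈ {p_1,…,p_r}` iff `{j·β/α} + {(l−j)·β/α} − {l·β/α} = 1` for all `1 ≤ j ≤ l−1`. -/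
theorem stmt16 (α β : ℤ) (hβ : 0 < β) (hβα : β < α) (hcop : Int.gcd α β = 1)
    (r : ℕ) (hr : 1 ≤ r) (u : ℕ → ℤ) (hu : ∀ k < r, 2 ≤ u k)
    (hP : cfP u r = α) (hQ : cfQ u r = β)
    (l : ℤ) (hl : 2 ≤ l) :
    (∃ k : ℕ, 1 ≤ k ∧ k ≤ r ∧ cfP u k = l) ↔
      (∀ j : ℤ, 1 ≤ j → j ≤ l - 1 →
        Int.fract (((j * β : ℤ) : ℚ) / (α : ℚ)) +
          Int.fract ((((l - j) * β : ℤ) : ℚ) / (α : ℚ)) -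
          Int.fract (((l * β : ℤ) : ℚ) / (α : ℚ)) = 1) :=
  stmt16_general α β hβα r u hu hP hQ l hl
end

section
/- Let a, b, c, d be integers with 0 < a < c, 0 < b < d, and a·d − b·c = 1. If (x, y) is a pair of integers satisfying a ≤ x ≤ c, a·y ≥ b·x, and (y − b)·(c − a) ≤ (d − b)·(x − a), then either a·y = b·x or (x, y) = (c, d). (Geometrically: the triangle with vertices (a,b), (c,d) and (c, cb/a) contains no lattice points in its interior, and all its boundary lattice points other than (c,d) lie on the line y = (b/a)x.) -/
/-!
Since `a·d − b·c = 1`, the vectors `(a, b)` and `(c, d)` form a basis of `ℤ²`, and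
`(x, y) = v·(a, b) + u·(c, d)` with integer coordinates `u = a·y − b·x ≥ 0` and `v = d·x − c·y`.
The chord from `(a, b)` to `(c, d)` is the line `u + v = 1`, so the remaining hypotheses say
`u + v ≥ 1` and `a·v + c·u ≤ c`. If `u ≥ 1` these force `(c − a)(1 − u) ≥ 0`, hence `u = 1`,
and then `a·v ≤ 0 ≤ v` gives `v = 0`.
-/

theorem eq_add_of_det_eq_one {R : Type*} [CommRing R] {a b c d : R} (x y : R)
    (hdet : a * d - b * c = 1) :
    x = a * (d * x - c * y) + c * (a * y - b * x) ∧
      y = b * (d * x - c * y) + d * (a * y - b * x) := by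
  constructor <;> linear_combination (-_) * hdet

theorem chord_side_eq {R : Type*} [CommRing R] (a b c d x y : R) :
    (y - b) * (c - a) - (d - b) * (x - a) =
      (a * d - b * c) - ((a * y - b * x) + (d * x - c * y)) := by
  ring

theorem Int.eq_one_and_eq_zero_of_one_le_add {a c u v : ℤ} (ha : 0 < a) (hac : a < c)
    (hu : 0 < u) (huv : 1 ≤ u + v) (hx : a * v + c * u ≤ c) : u = 1 ∧ v = 0 := by
  have hav : a * (1 - u) ≤ a * v := mul_le_mul_of_nonneg_left (by omega) ha.le
  have hcu : 0 ≤ (c - a) * (1 - u) := by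
    linarith [mul_sub c 1 u, mul_sub a 1 u, sub_mul c a (1 - u)]
  obtain rfl : u = 1 := by linarith [nonneg_of_mul_nonneg_right hcu (sub_pos.mpr hac)]
  exact ⟨rfl, by nlinarith⟩

theorem stmt17_general (a b c d x y : ℤ)
    (ha : 0 < a) (hac : a < c)
    (hdet : a * d - b * c = 1)
    (hx2 : x ≤ c)
    (hy1 : b * x ≤ a * y)
    (hy2 : (y - b) * (c - a) ≤ (d - b) * (x - a)) :
    a * y = b * x ∨ (x = c ∧ y = d) := by
  obtain ⟨hx, hy⟩ := eq_add_of_det_eq_one x y hdet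
  have hchord := chord_side_eq a b c d x y
  generalize hu : a * y - b * x = u at hx hy hchord
  generalize d * x - c * y = v at hx hy hchord
  have huv : 1 ≤ u + v := by linarith
  rcases (show 0 ≤ u by linarith).eq_or_lt with rfl | hu_pos
  · exact Or.inl (by linarith)
  · obtain ⟨rfl, rfl⟩ := Int.eq_one_and_eq_zero_of_one_le_add ha hac hu_pos huv (hx ▸ hx2)
    exact Or.inr ⟨by linarith, by linarith⟩

/-- Let `0 < a < c`, `0 < b < d` be integers with `a·d − b·c = 1`. If integers `(x, y)` satisfy
`a ≤ x ≤ c`, `a·y ≥ b·x` and `(y − b)·(c − a) ≤ (d − b)·(x − a)`, then either `a·y = b·x` or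
`(x, y) = (c, d)`. -/
theorem stmt17 (a b c d x y : ℤ)
    (ha : 0 < a) (hac : a < c) (hb : 0 < b) (hbd : b < d)
    (hdet : a * d - b * c = 1)
    (hx1 : a ≤ x) (hx2 : x ≤ c)
    (hy1 : b * x ≤ a * y)
    (hy2 : (y - b) * (c - a) ≤ (d - b) * (x - a)) :
    a * y = b * x ∨ (x = c ∧ y = d) :=
  stmt17_general a b c d x y ha hac hdet hx2 hy1 hy2
end

section
/- Let p_1, p_2, p_3, p_4 be pairwise distinct nonzero complex numbers. In the polynomial ring ℂ[a,b] graded by total degree, let K be the ideal generated by the three quadratic forms a·b, (p_1·a + b)·(p_2·a + b), and (p_3·a + b)·(p_4·a + b). Then the dimension of the degree-2 homogeneous component of ℂ[a,b]/K equals 1 if p_1·p_2 = p_3·p_4, and equals 0 if p_1·p_2 ≠ p_3·p_4. (This computation produces an equisingular family of weighted homogeneous surface singularities, with Seifert invariants (2,(2,2,3,3,7,7),(1,…,1)), in which the embedding dimension jumps from 3 to 4 along the discriminant p_1p_2 − p_3p_4 = 0; hence the embedding dimension is not a topological invariant.) -/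
/-!
The generators are quadratic forms, so the degree-2 part of the ideal they generate is just their
ℂ-span: in `∑ cᵢ gᵢ` only the constant terms of the `cᵢ` reach degree 2. Evaluating at `(0,1)`,
`(1,0)` and `(1,1)` shows that `ab`, `(p₁a + b)(p₂a + b)`, `(p₃a + b)(p₄a + b)` are linearly
independent when `p₁p₂ ≠ p₃p₄`; when `p₁p₂ = p₃p₄` the third is the second plus
`(p₃ + p₄ - p₁ - p₂) ab`. Since `ℂ[a,b]₂` has dimension 3, the quotient has dimension `3 - 3` or
`3 - 2`.
-/

open MvPolynomial

/-- The dimension of the degree-`k` homogeneous component of `ℂ[a,b]/K`: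
`dim_ℂ ℂ[a,b]_k − dim_ℂ (K ∩ ℂ[a,b]_k)`. -/
noncomputable def hdim2 (K : Ideal (MvPolynomial (Fin 2) ℂ)) (k : ℕ) : ℕ :=
  Module.finrank ℂ (MvPolynomial.homogeneousSubmodule (Fin 2) ℂ k) -
    Module.finrank ℂ
      (Submodule.restrictScalars ℂ K ⊓ MvPolynomial.homogeneousSubmodule (Fin 2) ℂ k :
        Submodule ℂ (MvPolynomial (Fin 2) ℂ))

open Module

namespace MvPolynomial

variable {σ R : Type*} [CommSemiring R]

theorem homogeneousComponent_mul_of_isHomogeneous {φ ψ : MvPolynomial σ R} {n : ℕ}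
    (hψ : ψ.IsHomogeneous n) (m : ℕ) :
    homogeneousComponent (m + n) (φ * ψ) = homogeneousComponent m φ * ψ := by
  conv_lhs => rw [← sum_homogeneousComponent φ, Finset.sum_mul, map_sum]
  rw [Finset.sum_eq_single m]
  · exact homogeneousComponent_eq_self ((homogeneousComponent_isHomogeneous m φ).mul hψ)
  · intro i _ hi
    exact homogeneousComponent_of_mem
      ((homogeneousComponent_isHomogeneous i φ).mul hψ) |>.trans (if_neg (by omega))
  · intro hm
    rw [homogeneousComponent_eq_zero m φ (by simpa using hm), zero_mul, map_zero]

theorem restrictScalars_span_inf_homogeneousSubmodule {S : Set (MvPolynomial σ R)} {n : ℕ}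
    (hS : ∀ s ∈ S, s.IsHomogeneous n) :
    (Ideal.span S).restrictScalars R ⊓ homogeneousSubmodule σ R n = Submodule.span R S := by
  refine le_antisymm ?_ (Submodule.span_le.mpr fun s hs => ⟨Ideal.subset_span hs, hS s hs⟩)
  rintro f ⟨hfI, hfn⟩
  obtain ⟨k, c, g, rfl⟩ := Submodule.mem_span_set'.mp hfI
  rw [← homogeneousComponent_eq_self hfn, map_sum]
  refine Submodule.sum_mem _ fun i _ => ?_
  rw [smul_eq_mul, ← zero_add n, homogeneousComponent_mul_of_isHomogeneous (hS _ (g i).2),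
    homogeneousComponent_zero, ← smul_eq_C_mul]
  exact Submodule.smul_mem _ _ (Submodule.subset_span (g i).2)

theorem finrank_homogeneousSubmodule_s18 {K : Type*} [Field K] [Fintype σ] [DecidableEq σ] (n : ℕ) :
    finrank K (homogeneousSubmodule σ K n) = (Fintype.card σ + n - 1).choose n := by
  have hdeg : {d : σ →₀ ℕ | d.degree = n} =
      ↑(Finset.univ.finsuppAntidiag n : Finset (σ →₀ ℕ)) := by
    ext d
    simp [Finsupp.degree_eq_sum]
  rw [homogeneousSubmodule_eq_finsupp_supported,
    (AddMonoidAlgebra.supportedEquivFinsupp _).finrank_eq, hdeg, finrank_finsupp_self]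
  simp [Finset.card_finsuppAntidiag_nat_eq_choose]

theorem isHomogeneous_C_mul_X_add_X (p : R) (i j : σ) :
    (C p * X i + X j : MvPolynomial σ R).IsHomogeneous 1 :=
  (isHomogeneous_C_mul_X p i).add (isHomogeneous_X R j)

end MvPolynomial

section BinaryQuadrics

variable {K : Type*} [Field K]

theorem linearIndependent_X_mul_X_quadric (p q : K) :
    LinearIndependent K
      ![(X 0 * X 1 : MvPolynomial (Fin 2) K), (C p * X 0 + X 1) * (C q * X 0 + X 1)] := by
  refine LinearIndependent.pair_iff.mpr fun s t hst => ?_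
  have h01 := congrArg (eval ![0, 1]) hst
  have h11 := congrArg (eval ![1, 1]) hst
  simp only [map_add, smul_eval, map_mul, eval_X, eval_C, Matrix.cons_val_zero,
    Matrix.cons_val_one, Matrix.cons_val_fin_one, mul_zero, mul_one, zero_add, map_zero] at h01 h11
  exact ⟨by simpa [h01] using h11, h01⟩

theorem linearIndependent_X_mul_X_quadrics {p₁ p₂ p₃ p₄ : K} (h : p₁ * p₂ ≠ p₃ * p₄) :
    LinearIndependent K ![(X 0 * X 1 : MvPolynomial (Fin 2) K),
      (C p₁ * X 0 + X 1) * (C p₂ * X 0 + X 1), (C p₃ * X 0 + X 1) * (C p₄ * X 0 + X 1)] := by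
  refine Fintype.linearIndependent_iff.mpr fun c hc => ?_
  have h01 := congrArg (eval ![0, 1]) hc
  have h10 := congrArg (eval ![1, 0]) hc
  have h11 := congrArg (eval ![1, 1]) hc
  simp only [Fin.sum_univ_three, map_add, smul_eval, map_mul, eval_X, eval_C, Matrix.cons_val,
    Matrix.cons_val_zero, Matrix.cons_val_one, Matrix.cons_val_fin_one, mul_zero, mul_one,
    zero_add, add_zero, map_zero] at h01 h10 h11
  have h1 : c 1 = 0 := by
    have : c 1 * (p₁ * p₂ - p₃ * p₄) = 0 := by linear_combination h10 - p₃ * p₄ * h01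
    simpa [sub_eq_zero, h] using this
  have h2 : c 2 = 0 := by linear_combination h01 - h1
  have h0 : c 0 = 0 := by
    linear_combination h11 - (p₁ + 1) * (p₂ + 1) * h1 - (p₃ + 1) * (p₄ + 1) * h2
  intro i
  fin_cases i <;> assumption

theorem quadric_eq_add_smul_X_mul_X {p₁ p₂ p₃ p₄ : K} (h : p₁ * p₂ = p₃ * p₄) :
    ((C p₃ * X 0 + X 1) * (C p₄ * X 0 + X 1) : MvPolynomial (Fin 2) K) =
      (C p₁ * X 0 + X 1) * (C p₂ * X 0 + X 1) + (p₃ + p₄ - p₁ - p₂) • (X 0 * X 1) := by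
  have hC : C p₃ * C p₄ = (C p₁ * C p₂ : MvPolynomial (Fin 2) K) := by
    rw [← map_mul, ← map_mul, h]
  rw [smul_eq_C_mul]
  simp only [map_add, map_sub]
  linear_combination X 0 ^ 2 * hC

theorem finrank_span_X_mul_X_quadrics [DecidableEq K] (p₁ p₂ p₃ p₄ : K) :
    finrank K (Submodule.span K {(X 0 * X 1 : MvPolynomial (Fin 2) K),
      (C p₁ * X 0 + X 1) * (C p₂ * X 0 + X 1), (C p₃ * X 0 + X 1) * (C p₄ * X 0 + X 1)}) =
      if p₁ * p₂ = p₃ * p₄ then 2 else 3 := by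
  split_ifs with h
  · have hmem : (C p₃ * X 0 + X 1) * (C p₄ * X 0 + X 1) ∈ Submodule.span K
        {(X 0 * X 1 : MvPolynomial (Fin 2) K), (C p₁ * X 0 + X 1) * (C p₂ * X 0 + X 1)} := by
      rw [quadric_eq_add_smul_X_mul_X h]
      exact add_mem (Submodule.subset_span (by simp))
        (Submodule.smul_mem _ _ (Submodule.subset_span (by simp)))
    rw [Set.pair_comm, Set.insert_comm, Submodule.span_insert_eq_span hmem,
      ← Matrix.range_cons_cons_empty, finrank_span_eq_card (linearIndependent_X_mul_X_quadric _ _),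
      Fintype.card_fin]
  · rw [← Set.singleton_union, ← Matrix.range_cons_cons_empty, ← Matrix.range_cons,
      finrank_span_eq_card (linearIndependent_X_mul_X_quadrics h), Fintype.card_fin]

end BinaryQuadrics

theorem stmt18_general (p₁ p₂ p₃ p₄ : ℂ) :
    hdim2 (Ideal.span
      {(X 0 * X 1 : MvPolynomial (Fin 2) ℂ),
        (C p₁ * X 0 + X 1) * (C p₂ * X 0 + X 1),
        (C p₃ * X 0 + X 1) * (C p₄ * X 0 + X 1)}) 2 =
      (if p₁ * p₂ = p₃ * p₄ then 1 else 0) := by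
  have hS : ∀ g ∈ ({X 0 * X 1, (C p₁ * X 0 + X 1) * (C p₂ * X 0 + X 1),
      (C p₃ * X 0 + X 1) * (C p₄ * X 0 + X 1)} : Set (MvPolynomial (Fin 2) ℂ)),
      g.IsHomogeneous 2 := by
    rintro g (rfl | rfl | rfl)
    · exact (isHomogeneous_X ℂ 0).mul (isHomogeneous_X ℂ 1)
    all_goals exact (isHomogeneous_C_mul_X_add_X _ 0 1).mul (isHomogeneous_C_mul_X_add_X _ 0 1)
  rw [hdim2, restrictScalars_span_inf_homogeneousSubmodule hS, finrank_homogeneousSubmodule_s18,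
    finrank_span_X_mul_X_quadrics, Fintype.card_fin]
  split_ifs <;> decide

/-- Let `p₁, p₂, p₃, p₄` be pairwise distinct nonzero complex numbers and `K` the ideal of
`ℂ[a,b]` generated by `a·b`, `(p₁a + b)(p₂a + b)` and `(p₃a + b)(p₄a + b)`. Then the degree-2
homogeneous component of `ℂ[a,b]/K` has dimension `1` if `p₁p₂ = p₃p₄` and `0` otherwise. -/
theorem stmt18 (p₁ p₂ p₃ p₄ : ℂ)
    (h₁ : p₁ ≠ 0) (h₂ : p₂ ≠ 0) (h₃ : p₃ ≠ 0) (h₄ : p₄ ≠ 0)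
    (h₁₂ : p₁ ≠ p₂) (h₁₃ : p₁ ≠ p₃) (h₁₄ : p₁ ≠ p₄)
    (h₂₃ : p₂ ≠ p₃) (h₂₄ : p₂ ≠ p₄) (h₃₄ : p₃ ≠ p₄) :
    hdim2 (Ideal.span
      {(X 0 * X 1 : MvPolynomial (Fin 2) ℂ),
        (C p₁ * X 0 + X 1) * (C p₂ * X 0 + X 1),
        (C p₃ * X 0 + X 1) * (C p₄ * X 0 + X 1)}) 2 =
      (if p₁ * p₂ = p₃ * p₄ then 1 else 0) :=
  stmt18_general p₁ p₂ p₃ p₄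
end
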